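/- arXiv:math/0602226 — 8 statements merged into one kernel-verified Lean document; each statement's English description precedes it below -/
import Mathlib

section
/- Let Δ be a simplicial complex such that for every face F of Δ, the link lk_Δ(F) is empty, zero-dimensional, or connected. Then Δ is pure, i.e., all facets (maximal faces) of Δ have the same dimension. -/
variable {V : Type*} [DecidableEq V] [Fintype V]

/-- A simplicial complex on the vertex set `V`: a collection of finite sets
closed under taking subsets. -/
def IsSimplicialComplex (Δ : Set (Finset V)) : Prop :=
  ∀ F ∈ Δ, ∀ G : Finset V, G ⊆ F → G ∈ Δ

/-- The link of a face `F`: `lk_Δ(F) = {G ∈ Δ : G ∪ F ∈ Δ, G ∩ F = ∅}`. -/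
def link (Δ : Set (Finset V)) (F : Finset V) : Set (Finset V) :=
  {G | G ∪ F ∈ Δ ∧ Disjoint G F}

/-- A facet: a maximal face of `Δ`. -/
def IsFacet (Δ : Set (Finset V)) (F : Finset V) : Prop :=
  F ∈ Δ ∧ ∀ G ∈ Δ, F ⊆ G → F = G

/-- A complex is connected if any two of its vertices are joined by a path of
edges (1-dimensional faces) of the complex. -/
def ComplexConnected (Δ : Set (Finset V)) : Prop :=
  ∀ x y : V, ({x} : Finset V) ∈ Δ → ({y} : Finset V) ∈ Δ →
    Relation.ReflTransGen (fun a b : V => ({a, b} : Finset V) ∈ Δ ∧ a ≠ b) x y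

/-!
Induction on the maximal size of a facet. The hypothesis passes to links, and the facets of
`lk_Δ {v}` are exactly the sets `H \ {v}` for the facets `H ∋ v` of `Δ`; so by induction any two
facets sharing a vertex have the same size. If the link of `∅`, i.e. `Δ` itself, is connected,
walk along a path of edges between vertices of two given facets, extending each edge to a facet:
consecutive facets share a vertex. If instead `Δ` has dimension at most `0`, every nonempty facet
is a vertex.
-/

def IsPure (Δ : Set (Finset V)) : Prop :=
  ∀ F G : Finset V, IsFacet Δ F → IsFacet Δ G → F.card = G.card

def IsLocallyPure (Δ : Set (Finset V)) : Prop :=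
  ∀ (v : V) (A B : Finset V), IsFacet Δ A → IsFacet Δ B → v ∈ A → v ∈ B → A.card = B.card

def LinksZeroDimOrConnected (Δ : Set (Finset V)) : Prop :=
  ∀ F ∈ Δ, link Δ F ⊆ {∅} ∨ (∀ G ∈ link Δ F, G.card ≤ 1) ∨ ComplexConnected (link Δ F)

section Degenerate

omit [DecidableEq V] [Fintype V]

variable {Δ : Set (Finset V)}

lemma isPure_of_nonempty
    (h : ∀ F G, IsFacet Δ F → IsFacet Δ G → F.Nonempty → G.Nonempty → F.card = G.card) :
    IsPure Δ := by
  intro F G hF hG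
  rcases F.eq_empty_or_nonempty with rfl | hFne
  · rw [hF.2 G hG.1 G.empty_subset]
  rcases G.eq_empty_or_nonempty with rfl | hGne
  · rw [hG.2 F hF.1 F.empty_subset]
  exact h F G hF hG hFne hGne

lemma isPure_of_card_le_one (h : ∀ F ∈ Δ, F.card ≤ 1) : IsPure Δ :=
  isPure_of_nonempty fun F G hF hG hFne hGne => by
    rw [le_antisymm (h F hF.1) hFne.card_pos, le_antisymm (h G hG.1) hGne.card_pos]

end Degenerate

section Link

omit [Fintype V]

variable {Δ : Set (Finset V)}

lemma IsSimplicialComplex.link (hΔ : IsSimplicialComplex Δ) (S : Finset V) :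
    IsSimplicialComplex (link Δ S) := fun _ hF _ hGF =>
  ⟨hΔ _ hF.1 _ (Finset.union_subset_union_left hGF), Finset.disjoint_of_subset_left hGF hF.2⟩

@[simp]
lemma link_empty : link Δ ∅ = Δ := by
  ext G
  simp [link]

lemma link_link {S F : Finset V} (hFS : Disjoint F S) :
    link (link Δ S) F = link Δ (F ∪ S) := by
  ext G
  simp only [link, Set.mem_ofPred_eq, Finset.union_assoc, Finset.disjoint_union_right,
    Finset.disjoint_union_left]
  tauto

lemma LinksZeroDimOrConnected.link (h : LinksZeroDimOrConnected Δ) (S : Finset V) :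
    LinksZeroDimOrConnected (link Δ S) := fun F hF => by
  rw [link_link hF.2]
  exact h _ hF.1

lemma IsFacet.sdiff_singleton_link {H : Finset V} {v : V} (hH : IsFacet Δ H) (hv : v ∈ H) :
    IsFacet (link Δ {v}) (H \ {v}) := by
  have hHv : H \ {v} ∪ {v} = H := Finset.sdiff_union_of_subset (Finset.singleton_subset_iff.2 hv)
  refine ⟨⟨by rw [hHv]; exact hH.1, Finset.sdiff_disjoint⟩, fun G hG hHG => ?_⟩
  have : H = G ∪ {v} := hH.2 _ hG.1 (hHv ▸ Finset.union_subset_union_left hHG)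
  rw [this, Finset.union_sdiff_right, Finset.sdiff_eq_self_of_disjoint hG.2]

lemma isLocallyPure_of_isPure_link (hpure : ∀ v, IsPure (link Δ {v})) : IsLocallyPure Δ := by
  intro v A B hA hB hvA hvB
  rw [← Finset.card_sdiff_add_card_eq_card (Finset.singleton_subset_iff.2 hvA),
    ← Finset.card_sdiff_add_card_eq_card (Finset.singleton_subset_iff.2 hvB),
    hpure v _ _ (hA.sdiff_singleton_link hvA) (hB.sdiff_singleton_link hvB)]

end Link

section Finite

variable {Δ : Set (Finset V)}

omit [DecidableEq V] in
lemma exists_isFacet_superset {F : Finset V} (hF : F ∈ Δ) : ∃ H, IsFacet Δ H ∧ F ⊆ H := by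
  obtain ⟨H, ⟨hHΔ, hFH⟩, hmax⟩ := Set.Finite.exists_maximalFor Finset.card
    {H : Finset V | H ∈ Δ ∧ F ⊆ H} (Set.toFinite _) ⟨F, hF, subset_rfl⟩
  refine ⟨H, ⟨hHΔ, fun G hG hHG => ?_⟩, hFH⟩
  exact Finset.eq_of_subset_of_card_le hHG
    (hmax ⟨hG, hFH.trans hHG⟩ (Finset.card_le_card hHG))

lemma IsFacet.exists_of_link_singleton {K : Finset V} {v : V}
    (hK : IsFacet (link Δ {v}) K) : ∃ H, IsFacet Δ H ∧ v ∈ H ∧ K = H \ {v} := by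
  obtain ⟨H, hH, hKH⟩ := exists_isFacet_superset hK.1.1
  have hvH : v ∈ H := hKH (Finset.mem_union_right _ (Finset.mem_singleton_self v))
  have hKH' : K ⊆ H \ {v} := Finset.subset_sdiff.2 ⟨Finset.union_subset_left hKH, hK.1.2⟩
  exact ⟨H, hH, hvH, hK.2 _ (hH.sdiff_singleton_link hvH).1 hKH'⟩

lemma IsLocallyPure.card_eq_of_reflTransGen (hloc : IsLocallyPure Δ)
    {F G : Finset V} {x y : V} (hF : IsFacet Δ F) (hG : IsFacet Δ G) (hx : x ∈ F) (hy : y ∈ G)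
    (hxy : Relation.ReflTransGen (fun a b : V => ({a, b} : Finset V) ∈ Δ ∧ a ≠ b) x y) :
    F.card = G.card := by
  induction hxy generalizing G with
  | refl => exact hloc x F G hF hG hx hy
  | @tail b c _ hbc ih =>
    obtain ⟨H, hH, hbcH⟩ := exists_isFacet_superset hbc.1
    calc F.card = H.card := ih hH (hbcH (by simp))
      _ = G.card := hloc c H G hH hG (hbcH (by simp)) hy

lemma IsLocallyPure.isPure_of_complexConnected (hloc : IsLocallyPure Δ)
    (hΔ : IsSimplicialComplex Δ) (hconn : ComplexConnected Δ) : IsPure Δ :=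
  isPure_of_nonempty fun F G hF hG ⟨x, hx⟩ ⟨y, hy⟩ =>
    hloc.card_eq_of_reflTransGen hF hG hx hy
      (hconn x y (hΔ F hF.1 _ (Finset.singleton_subset_iff.2 hx))
        (hΔ G hG.1 _ (Finset.singleton_subset_iff.2 hy)))

lemma isPure_of_isPure_link_singleton (hΔ : IsSimplicialComplex Δ)
    (hlink : LinksZeroDimOrConnected Δ) (hpure : ∀ v, IsPure (link Δ {v})) : IsPure Δ := by
  intro F G hF hG
  have hlink₀ := hlink ∅ (hΔ F hF.1 ∅ F.empty_subset)
  rw [link_empty] at hlink₀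
  rcases hlink₀ with hle | hle | hconn
  · exact isPure_of_card_le_one (fun F hF => by simp [Set.mem_singleton_iff.1 (hle hF)]) F G hF hG
  · exact isPure_of_card_le_one hle F G hF hG
  · exact (isLocallyPure_of_isPure_link hpure).isPure_of_complexConnected hΔ hconn F G hF hG

lemma isPure_of_forall_card_le (n : ℕ) (hΔ : IsSimplicialComplex Δ)
    (hlink : LinksZeroDimOrConnected Δ) (hn : ∀ F, IsFacet Δ F → F.card ≤ n) : IsPure Δ := by
  induction n generalizing Δ with
  | zero => exact fun F G hF hG => by rw [Nat.le_zero.1 (hn F hF), Nat.le_zero.1 (hn G hG)]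
  | succ n ih =>
    refine isPure_of_isPure_link_singleton hΔ hlink fun v => ih (hΔ.link _) (hlink.link _) ?_
    intro K hK
    obtain ⟨H, hH, hvH, rfl⟩ := hK.exists_of_link_singleton
    rw [Finset.card_sdiff_of_subset (Finset.singleton_subset_iff.2 hvH), Finset.card_singleton]
    have := hn H hH
    omega

end Finite

/-- If the link of every face of `Δ` is empty, zero-dimensional, or connected,
then `Δ` is pure: all facets have the same dimension (cardinality). -/
theorem stmt_0 (Δ : Set (Finset V)) (hΔ : IsSimplicialComplex Δ)
    (hlink : ∀ F ∈ Δ, link Δ F ⊆ {∅} ∨ (∀ G ∈ link Δ F, G.card ≤ 1) ∨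
      ComplexConnected (link Δ F)) :
    ∀ F G : Finset V, IsFacet Δ F → IsFacet Δ G → F.card = G.card :=
  isPure_of_forall_card_le (Fintype.card V) hΔ hlink fun F _ => Finset.card_le_univ F
end

section
/- For every n ≥ 1, the number of derangements of {1,…,n} equals the number of permutations σ of {1,…,n} whose first descent position is even, i.e., the least i with σ(i) > σ(i+1) is even (permutations with no descent, namely the identity, are counted as having first descent n if n is even, i.e., the identity is counted iff n is even). -/
/-- The value `σ(j+1)` of a permutation of `{1,…,n}`, written with 0-based index `j`
(junk value `0` out of range). -/
def permVal (n : ℕ) (σ : Equiv.Perm (Fin n)) (j : ℕ) : ℕ :=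
  if h : j < n then (σ ⟨j, h⟩ : ℕ) else 0

/-- The set of descents of `σ`: indices `i ∈ {1,…,n−1}` with `σ(i) > σ(i+1)`. -/
def descentSet (n : ℕ) (σ : Equiv.Perm (Fin n)) : Finset ℕ :=
  (Finset.Icc 1 (n - 1)).filter fun i => permVal n σ i < permVal n σ (i - 1)

/-- The first descent of `σ`, with the convention that a permutation with no
descent has first descent `n`. -/
def firstDescent (n : ℕ) (σ : Equiv.Perm (Fin n)) : ℕ :=
  if h : (descentSet n σ).Nonempty then (descentSet n σ).min' h else n

/-!
Since `∑_{k ≤ m} (-1)^k` is `1` for even `m` and `0` for odd `m`, the number of permutations with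
even first descent is `∑_k (-1)^k · #{σ | k ≤ firstDescent σ}`. A permutation has first descent
at least `k` exactly when it increases on the first `k` positions, and right multiplication by
the permutations of those positions shows that these are `n!/k!` in number. The result is the
classical formula `∑_k (-1)^k n!/k!` for the number of derangements.
-/

open Equiv Finset Nat

theorem natCast_card_filter_even_eq_sum_neg_one_pow {β : Type*} (s : Finset β) (d : β → ℕ) {N : ℕ}
    (hd : ∀ x ∈ s, d x ≤ N) :
    (#{x ∈ s | Even (d x)} : ℤ) = ∑ k ∈ range (N + 1), (-1) ^ k * (#{x ∈ s | k ≤ d x} : ℤ) := by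
  calc (#{x ∈ s | Even (d x)} : ℤ)
      = ∑ x ∈ s, ∑ k ∈ range (d x + 1), (-1 : ℤ) ^ k := by
        rw [natCast_card_filter]
        refine sum_congr rfl fun x _ => ?_
        simp only [neg_one_geom_sum, Nat.even_add_one, ite_not]
    _ = ∑ x ∈ s, ∑ k ∈ range (N + 1), if k ≤ d x then (-1 : ℤ) ^ k else 0 := by
        refine sum_congr rfl fun x hx => ?_
        rw [← sum_filter]
        congr 1
        ext k
        have := hd x hx
        simp only [mem_range, mem_filter]
        omega
    _ = _ := by
        rw [sum_comm]
        simp_rw [natCast_card_filter, mul_sum, mul_ite, mul_one, mul_zero]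

section SortedRestriction

variable {k : ℕ} {α : Type*} [DecidableEq α] (e : Fin k ↪ α)

lemma comp_mul_extendDomainHom (σ : Perm α) (π : Perm (Fin k)) :
    ⇑(σ * Perm.extendDomainHom e.toEquivRange π) ∘ e = (⇑σ ∘ e) ∘ π := by
  ext i
  simpa using congrArg σ (Perm.extendDomain_apply_image π e.toEquivRange i)

variable [Finite α] [LinearOrder α]

/-- Every `ρ` factors uniquely as `σ * π` with `π` permuting the range of `e` and `σ ∘ e`
increasing: `π` is the permutation sorting `ρ ∘ e`. -/
theorem card_strictMono_comp_mul_factorial :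
    Nat.card {σ : Perm α // StrictMono (σ ∘ e)} * k ! = (Nat.card α)! := by
  set ext := Perm.extendDomainHom e.toEquivRange
  let Φ : {σ : Perm α // StrictMono (σ ∘ e)} × Perm (Fin k) → Perm α := fun p => p.1 * ext p.2
  have hΦ : Function.Bijective Φ := by
    refine ⟨?_, fun ρ => ?_⟩
    · rintro ⟨⟨σ₁, h₁⟩, π₁⟩ ⟨⟨σ₂, h₂⟩, π₂⟩ h
      have hσ : σ₂ = σ₁ * ext (π₁ * π₂⁻¹) := by
        rw [map_mul, map_inv, ← mul_assoc, eq_mul_inv_iff_mul_eq]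
        exact h.symm
      have hcomp : (⇑σ₁ ∘ e) ∘ ⇑(π₁ * π₂⁻¹) = (⇑σ₁ ∘ e) ∘ ⇑(1 : Perm (Fin k)) :=
        Tuple.unique_monotone (by rw [← comp_mul_extendDomainHom, ← hσ]; exact h₂.monotone)
          h₁.monotone
      obtain rfl : π₁ = π₂ :=
        mul_inv_eq_one.mp <| Equiv.ext fun i => h₁.injective (congrFun hcomp i)
      obtain rfl : σ₁ = σ₂ := mul_right_cancel h
      rfl
    · set s := Tuple.sort (⇑ρ ∘ e)
      have hmono : StrictMono (⇑(ρ * ext s) ∘ e) := by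
        rw [comp_mul_extendDomainHom]
        exact (Tuple.monotone_sort _).strictMono_of_injective
          ((ρ.injective.comp e.injective).comp s.injective)
      exact ⟨(⟨ρ * ext s, hmono⟩, s⁻¹), by simp [Φ, mul_assoc]⟩
  have hcard := Nat.card_eq_of_bijective Φ hΦ
  rwa [Nat.card_prod, Nat.card_perm, Nat.card_perm, Nat.card_eq_fintype_card (α := Fin k),
    Fintype.card_fin] at hcard

end SortedRestriction

section Descents

variable {n : ℕ} (σ : Perm (Fin n))

lemma pos_of_mem_descentSet {i : ℕ} (hi : i ∈ descentSet n σ) : 0 < i := by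
  simp only [descentSet, mem_filter, mem_Icc] at hi
  omega

lemma succ_mem_descentSet_iff {j : ℕ} (hj : j + 1 < n) :
    j + 1 ∈ descentSet n σ ↔ σ ⟨j + 1, hj⟩ < σ ⟨j, by omega⟩ := by
  rw [descentSet, mem_filter, mem_Icc, permVal, permVal, dif_pos hj, Nat.add_sub_cancel,
    dif_pos (show j < n by omega), Fin.lt_def]
  omega

lemma firstDescent_le : firstDescent n σ ≤ n := by
  unfold firstDescent
  split_ifs with h
  · have := (mem_filter.mp (min'_mem _ h)).1
    simp only [mem_Icc] at this
    omega
  · rfl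

lemma le_firstDescent_iff {k : ℕ} (hk : k ≤ n) :
    k ≤ firstDescent n σ ↔ ∀ i ∈ descentSet n σ, k ≤ i := by
  unfold firstDescent
  split_ifs with h
  · exact le_min'_iff _ h
  · simp [not_nonempty_iff_eq_empty.mp h, hk]

theorem le_firstDescent_iff_strictMono {k : ℕ} (hk : k ≤ n) :
    k ≤ firstDescent n σ ↔ StrictMono (σ ∘ Fin.castLE hk) := by
  rw [le_firstDescent_iff σ hk]
  cases k with
  | zero => exact iff_of_true (fun _ _ => Nat.zero_le _) fun a => Fin.elim0 a
  | succ m =>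
    rw [Fin.strictMono_iff_lt_succ]
    constructor
    · intro h j
      have hj : (j : ℕ) + 1 ∉ descentSet n σ := fun hmem => by have := h _ hmem; omega
      rw [succ_mem_descentSet_iff σ (by omega), not_lt] at hj
      refine lt_of_le_of_ne hj fun heq => ?_
      have := congrArg Fin.val (σ.injective heq)
      simp at this
    · intro h i hi
      by_contra! hlt
      obtain ⟨j, rfl⟩ := Nat.exists_eq_add_one_of_ne_zero (pos_of_mem_descentSet σ hi).ne'
      rw [succ_mem_descentSet_iff σ (by omega)] at hi
      exact (h ⟨j, by omega⟩).not_gt hi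

end Descents

theorem card_le_firstDescent {n k : ℕ} (hk : k ≤ n) :
    #{σ : Perm (Fin n) | k ≤ firstDescent n σ} = (k + 1).ascFactorial (n - k) := by
  have hasc : k ! * (k + 1).ascFactorial (n - k) = n ! := by
    rw [factorial_mul_ascFactorial, Nat.add_sub_cancel' hk]
  rw [← Fintype.card_subtype, ← Nat.card_eq_fintype_card,
    Nat.card_congr (subtypeEquivRight fun σ => le_firstDescent_iff_strictMono σ hk)]
  refine Nat.eq_of_mul_eq_mul_left (factorial_pos k) ?_
  rw [hasc, mul_comm]
  simpa using card_strictMono_comp_mul_factorial (Fin.castLEEmb hk)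

theorem stmt_2_general (n : ℕ) :
    Nat.card {σ : Equiv.Perm (Fin n) // ∀ i, σ i ≠ i} =
      Nat.card {σ : Equiv.Perm (Fin n) // Even (firstDescent n σ)} := by
  have hderangements : Nat.card {σ : Perm (Fin n) // ∀ i, σ i ≠ i} = numDerangements n := by
    rw [← card_derangements_fin_eq_numDerangements, ← Nat.card_eq_fintype_card]
    rfl
  have heven : (Nat.card {σ : Perm (Fin n) // Even (firstDescent n σ)} : ℤ) =
      ∑ k ∈ range (n + 1), (-1) ^ k * (#{σ : Perm (Fin n) | k ≤ firstDescent n σ} : ℤ) := by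
    rw [Nat.card_eq_fintype_card, Fintype.card_subtype]
    exact natCast_card_filter_even_eq_sum_neg_one_pow _ _ fun σ _ => firstDescent_le σ
  apply Nat.cast_injective (R := ℤ)
  rw [hderangements, heven, numDerangements_sum]
  refine sum_congr rfl fun k hk => ?_
  rw [card_le_firstDescent (Nat.lt_succ_iff.mp (mem_range.mp hk))]

/-- The number of derangements of `{1,…,n}` equals the number of permutations of
`{1,…,n}` whose first descent is even. -/
theorem stmt_2 (n : ℕ) (hn : 1 ≤ n) :
    Nat.card {σ : Equiv.Perm (Fin n) // ∀ i, σ i ≠ i} =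
      Nat.card {σ : Equiv.Perm (Fin n) // Even (firstDescent n σ)} :=
  stmt_2_general n
end

section
/- The number of rooted planar binary trees on leaf set [n+1] that are 1-brushes equals n!. -/
/-! At every internal node of a binary `1`-brush the right child is a leaf whose label exceeds the
smallest label of the left child, so the tree is a left comb. It is determined by the label `b` at
the bottom of its left spine and the list of right-leaf labels read from the root down, the only
constraint being that `b` is smaller than all of them. On the leaf set `[n+1]` this forces `b = 1`,
and the list is an arbitrary ordering of `{2, …, n+1}`, of which there are `n!`. -/

/-- Rooted planar `(d+1)`-ary trees with leaves labeled by natural numbers: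
every internal node has exactly `d+1` children, ordered left to right. -/
inductive PTree (d : ℕ) : Type
  | leaf : ℕ → PTree d
  | node : (Fin (d + 1) → PTree d) → PTree d

namespace PTree

/-- The list of leaf labels, read from left to right. -/
def leaves {d : ℕ} : PTree d → List ℕ
  | leaf a => [a]
  | node f => (List.ofFn fun i => leaves (f i)).flatten

/-- `m(x)`: the smallest leaf label in the tree. -/
def minLeaf {d : ℕ} : PTree d → ℕ
  | leaf a => a
  | node f => Finset.univ.inf' Finset.univ_nonempty fun i => minLeaf (f i)

/-- A tree is a `d`-brush if at every internal node the `m`-values of the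
children increase from left to right and the child with the largest `m`-value
(the rightmost one) is a leaf. -/
def IsBrush {d : ℕ} : PTree d → Prop
  | leaf _ => True
  | node f => (∀ i, IsBrush (f i)) ∧ (StrictMono fun i => minLeaf (f i)) ∧
      ∃ a, f (Fin.last d) = leaf a

/-- The tree has leaf set exactly `{1,…,m}`, each label occurring once. -/
def OnLeafSet {d : ℕ} (T : PTree d) (m : ℕ) : Prop :=
  T.leaves.Nodup ∧ ∀ a, a ∈ T.leaves ↔ a ∈ Finset.Icc 1 m

end PTree

open List in
theorem Finset.natCard_nodup_list_mem_iff {α : Type*} (s : Finset α) :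
    Nat.card {l : List α // l.Nodup ∧ ∀ a, a ∈ l ↔ a ∈ s} = s.card.factorial := by
  classical
  have hperm (l : List α) :
      (l.Nodup ∧ ∀ a, a ∈ l ↔ a ∈ s) ↔ l ∈ s.toList.permutations.toFinset := by
    rw [mem_toFinset, mem_permutations]
    constructor
    · rintro ⟨hl, hmem⟩
      exact (perm_ext_iff_of_nodup hl s.nodup_toList).2 (by simpa only [Finset.mem_toList])
    · intro hp
      exact ⟨hp.nodup_iff.2 s.nodup_toList, fun a => by rw [hp.mem_iff, Finset.mem_toList]⟩
  rw [Nat.card_congr (Equiv.subtypeEquivRight hperm), Nat.card_eq_fintype_card,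
    Fintype.card_coe, toFinset_card_of_nodup (nodup_permutations _ s.nodup_toList),
    length_permutations, Finset.length_toList]

namespace PTree

lemma minLeaf_node_two (f : Fin 2 → PTree 1) :
    (node f).minLeaf = min (f 0).minLeaf (f 1).minLeaf := by
  simp [minLeaf, Fin.univ_succ]

lemma leaves_node_two (f : Fin 2 → PTree 1) :
    (node f).leaves = (f 0).leaves ++ (f 1).leaves := by
  simp [leaves, List.ofFn_succ]

lemma isBrush_node_two {f : Fin 2 → PTree 1} :
    (node f).IsBrush ↔
      (f 0).IsBrush ∧ (f 0).minLeaf < (f 1).minLeaf ∧ ∃ a, f 1 = leaf a := by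
  refine ⟨fun ⟨hb, hm, ha⟩ => ⟨hb 0, hm Fin.zero_lt_one, ha⟩,
    fun ⟨h₀, hlt, a, ha⟩ => ⟨?_, ?_, a, ha⟩⟩
  · intro i
    fin_cases i
    exacts [h₀, ha ▸ trivial]
  · exact Fin.strictMono_iff_lt_succ.2 fun i => by fin_cases i; exact hlt

/-- The binary tree whose left spine ends in the leaf `b` and whose right leaves are, from the
root down, the entries of `l`. -/
def leftComb (b : ℕ) : List ℕ → PTree 1
  | [] => leaf b
  | a :: l => node ![leftComb b l, leaf a]

def rightLeaves : PTree 1 → List ℕ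
  | leaf _ => []
  | node f => (f 1).minLeaf :: (f 0).rightLeaves

lemma leaves_leftComb (b : ℕ) (l : List ℕ) : (leftComb b l).leaves = b :: l.reverse := by
  induction l with
  | nil => rfl
  | cons a l ih => simp [leftComb, leaves_node_two, ih, leaves]

lemma rightLeaves_leftComb (b : ℕ) (l : List ℕ) : (leftComb b l).rightLeaves = l := by
  induction l with
  | nil => rfl
  | cons a l ih => simp [leftComb, rightLeaves, ih, minLeaf]

lemma minLeaf_leftComb {b : ℕ} {l : List ℕ} (hb : ∀ a ∈ l, b ≤ a) :
    (leftComb b l).minLeaf = b := by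
  induction l with
  | nil => rfl
  | cons a l ih =>
    simp only [List.mem_cons, forall_eq_or_imp] at hb
    simp [leftComb, minLeaf_node_two, ih hb.2, minLeaf, hb.1]

lemma isBrush_leftComb {b : ℕ} {l : List ℕ} :
    (leftComb b l).IsBrush ↔ ∀ a ∈ l, b < a := by
  induction l with
  | nil => simp [leftComb, IsBrush]
  | cons a l ih =>
    simp only [leftComb, isBrush_node_two, Matrix.cons_val_zero, Matrix.cons_val_one,
      leaf.injEq, exists_eq', and_true, List.forall_mem_cons, ih]
    rw [and_comm]
    refine and_congr_left fun hl => ?_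
    rw [minLeaf_leftComb fun x hx => (hl x hx).le]
    rfl

lemma leftComb_minLeaf_rightLeaves {T : PTree 1} (hT : T.IsBrush) :
    leftComb T.minLeaf T.rightLeaves = T := by
  induction T with
  | leaf a => rfl
  | node f ih =>
    obtain ⟨hf₀, hlt, a, hf₁⟩ := isBrush_node_two.1 hT
    rw [rightLeaves, minLeaf_node_two, min_eq_left hlt.le, leftComb, ih 0 hf₀, hf₁]
    congr 1
    funext i
    fin_cases i
    · rfl
    · exact hf₁.symm

lemma onLeafSet_leftComb_iff {b m : ℕ} {l : List ℕ} (hb : ∀ a ∈ l, b < a) :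
    (leftComb b l).OnLeafSet (m + 1) ↔
      b = 1 ∧ l.Nodup ∧ ∀ a, a ∈ l ↔ a ∈ Finset.Icc 2 (m + 1) := by
  have hbl : b ∉ l := fun h => lt_irrefl b (hb b h)
  simp only [OnLeafSet, leaves_leftComb, List.nodup_cons, List.mem_reverse, List.nodup_reverse,
    List.mem_cons, Finset.mem_Icc, hbl, not_false_eq_true, true_and]
  constructor
  · rintro ⟨hl, hmem⟩
    have hb₁ : b = 1 := by
      have := (hmem b).1 (Or.inl rfl)
      rcases (hmem 1).2 (by omega) with h | h
      · omega
      · have := hb 1 h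
        omega
    refine ⟨hb₁, hl, fun a => ⟨fun ha => ?_, fun ha => ?_⟩⟩
    · have := hb a ha
      have := (hmem a).1 (Or.inr ha)
      omega
    · exact ((hmem a).2 (by omega)).resolve_left (by omega)
  · rintro ⟨rfl, hl, hmem⟩
    exact ⟨hl, fun a => by rw [hmem]; omega⟩

lemma minLeaf_lt_of_mem_rightLeaves {T : PTree 1} (hT : T.IsBrush) :
    ∀ a ∈ T.rightLeaves, T.minLeaf < a :=
  isBrush_leftComb.1 (by rwa [leftComb_minLeaf_rightLeaves hT])

lemma onLeafSet_iff_of_isBrush {T : PTree 1} {m : ℕ} (hT : T.IsBrush) :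
    T.OnLeafSet (m + 1) ↔
      T.minLeaf = 1 ∧ T.rightLeaves.Nodup ∧
        ∀ a, a ∈ T.rightLeaves ↔ a ∈ Finset.Icc 2 (m + 1) := by
  conv_lhs => rw [← leftComb_minLeaf_rightLeaves hT]
  exact onLeafSet_leftComb_iff (minLeaf_lt_of_mem_rightLeaves hT)

def brushEquivArrangement (m : ℕ) :
    {T : PTree 1 // T.OnLeafSet (m + 1) ∧ T.IsBrush} ≃
      {l : List ℕ // l.Nodup ∧ ∀ a, a ∈ l ↔ a ∈ Finset.Icc 2 (m + 1)} where
  toFun T := ⟨T.1.rightLeaves, ((onLeafSet_iff_of_isBrush T.2.2).1 T.2.1).2⟩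
  invFun l :=
    have hl : ∀ a ∈ l.1, 1 < a := fun a ha => (Finset.mem_Icc.1 ((l.2.2 a).1 ha)).1
    ⟨leftComb 1 l, (onLeafSet_leftComb_iff hl).2 ⟨rfl, l.2⟩, isBrush_leftComb.2 hl⟩
  left_inv := fun ⟨T, hO, hB⟩ => Subtype.ext <| by
    simpa only [((onLeafSet_iff_of_isBrush hB).1 hO).1] using leftComb_minLeaf_rightLeaves hB
  right_inv l := Subtype.ext (rightLeaves_leftComb 1 l)

end PTree

/-- The number of rooted planar binary trees on leaf set `[n+1]` that are
`1`-brushes equals `n!`. -/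
theorem stmt_4 (n : ℕ) :
    Nat.card {T : PTree 1 // T.OnLeafSet (n + 1) ∧ T.IsBrush} = n.factorial := by
  rw [Nat.card_congr (PTree.brushEquivArrangement n), Finset.natCard_nodup_list_mem_iff,
    Nat.card_Icc]
  rfl
end

section
/- The number of rooted planar ternary trees on leaf set [2n+1] that are 2-brushes equals ((2n−1)!!)^2, the square of the double factorial 1·3·5···(2n−1). -/
/-
At the root of a 2-brush on `S` sit subtrees `T₁`, `T₂` and a leaf `a` with `m(T₁) < m(T₂) < a`,
so `min S` lies in `T₁`. The split is determined by `U = leaves(T₂) ∪ {a} ⊆ S \ {min S}` and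
`a ∈ U`, where `a` may be any element of `U` but its minimum. Hence the number `c N` of brushes on
`N ≥ 2` leaves satisfies `c N = ∑ₖ C(N-1, k) (k-1) c (N-k) c (k-1)`, and `c N = 0` for even `N`.
Dividing by `(2n+2)!` and writing `u k = ((2k-1)‼)² / (2k)!`, the claim `c (2n+1) = ((2n-1)‼)²`
becomes `u (n+1) = ∑_{i+j=n} u i / (2i+2) · u j`. Since `u k / (2k+2) = u k - u (k+1)`, for
`F = ∑ u k xᵏ = (1 - x)^(-1/2)` this is the identity `F - 1 = (1 - (1 - x) F) F`, i.e.
`(1 - x) F² = 1`. That holds because `2 (1 - x) F' = F`, which is the recursion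
`(2k+2) u (k+1) = (2k+1) u k`.
-/

open Nat Finset PowerSeries

/-- `((2k-1)‼)² / (2k)! = C(2k, k) / 4 ^ k`, the coefficients of `(1 - x) ^ (-1/2)`. -/
def sqDoubleFactorialRatio (k : ℕ) : ℚ := ((2 * k - 1)‼ ^ 2 : ℕ) / (2 * k)!

namespace sqDoubleFactorialRatio

local notation "u" => sqDoubleFactorialRatio
local notation "F" => PowerSeries.mk sqDoubleFactorialRatio

theorem zero : u 0 = 1 := by simp [sqDoubleFactorialRatio]

theorem succ_mul (k : ℕ) : u (k + 1) * (2 * k + 2) = u k * (2 * k + 1) := by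
  have hdf : (2 * (k + 1) - 1)‼ = (2 * k + 1) * (2 * k - 1)‼ := by
    rw [show 2 * (k + 1) - 1 = 2 * k + 1 by omega, doubleFactorial_add_one]
  have hf : (2 * (k + 1))! = (2 * k + 2) * ((2 * k + 1) * (2 * k)!) := by
    rw [show 2 * (k + 1) = 2 * k + 1 + 1 by ring, factorial_succ, factorial_succ]
  simp only [sqDoubleFactorialRatio, hdf, hf]
  push_cast
  field_simp

theorem sub_succ (k : ℕ) : u k - u (k + 1) = u k / (2 * k + 2) := by
  have := succ_mul k
  field_simp
  linarith

theorem two_smul_one_sub_X_mul_derivative :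
    (2 : ℚ) • ((1 - X) * d⁄dX ℚ F) = F := by
  ext n
  rw [coeff_smul, sub_mul, one_mul, map_sub, coeff_derivative, coeff_mk, coeff_mk]
  rcases n with _ | n
  · rw [coeff_zero_X_mul]
    linear_combination succ_mul 0
  · rw [coeff_succ_X_mul, coeff_derivative, coeff_mk]
    have := succ_mul (n + 1)
    push_cast at this ⊢
    linear_combination this

theorem one_sub_X_mul_sq : (1 - X) * F ^ 2 = 1 := by
  apply derivative.ext
  · have h := two_smul_one_sub_X_mul_derivative
    rw [two_smul] at h
    rw [derivative_one, Derivation.leibniz, derivative_pow]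
    simp only [cast_ofNat, Nat.add_one_sub_one, pow_one, smul_eq_mul, map_sub,
      Derivation.map_one_eq_zero, derivative_X, zero_sub, mul_neg, mul_one]
    linear_combination F * h
  · simp [zero]

theorem X_mul_mk_div_eq : X * PowerSeries.mk (fun k => u k / (2 * k + 2)) = 1 - (1 - X) * F := by
  ext n
  rcases n with _ | n
  · simp [zero]
  · rw [coeff_succ_X_mul, coeff_mk, sub_mul, one_mul, sub_sub_eq_add_sub, map_sub, map_add,
      coeff_succ_X_mul, coeff_one, if_neg n.succ_ne_zero, coeff_mk, coeff_mk]
    linear_combination -(sub_succ n)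

theorem sum_antidiagonal_div_mul (n : ℕ) :
    ∑ p ∈ antidiagonal n, u p.1 / (2 * p.1 + 2) * u p.2 = u (n + 1) := by
  have h : X * (PowerSeries.mk (fun k => u k / (2 * k + 2)) * F) = F - 1 := by
    rw [← mul_assoc, X_mul_mk_div_eq]
    linear_combination -one_sub_X_mul_sq
  have := congrArg (coeff (n + 1)) h
  rw [coeff_succ_X_mul, coeff_mul, map_sub, coeff_one, if_neg n.succ_ne_zero, sub_zero,
    coeff_mk] at this
  simpa only [coeff_mk] using this

end sqDoubleFactorialRatio

open sqDoubleFactorialRatio in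
theorem sum_antidiagonal_choose_mul_sq_doubleFactorial (n : ℕ) :
    ∑ p ∈ antidiagonal n,
        (2 * n + 2).choose (2 * p.1 + 2) * (2 * p.1 + 1) * ((2 * p.1 - 1)‼ ^ 2 * (2 * p.2 - 1)‼ ^ 2)
      = (2 * n + 1)‼ ^ 2 := by
  suffices h : ∀ p ∈ antidiagonal n,
      ((2 * n + 2).choose (2 * p.1 + 2) * (2 * p.1 + 1) * ((2 * p.1 - 1)‼ ^ 2 * (2 * p.2 - 1)‼ ^ 2)
        : ℚ) =
        (2 * n + 2)! * (sqDoubleFactorialRatio p.1 / (2 * p.1 + 2) * sqDoubleFactorialRatio p.2) by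
    rw [← Nat.cast_inj (R := ℚ)]
    push_cast
    rw [Finset.sum_congr rfl h, ← Finset.mul_sum, sum_antidiagonal_div_mul, sqDoubleFactorialRatio,
      show 2 * (n + 1) = 2 * n + 2 by ring, show 2 * n + 2 - 1 = 2 * n + 1 by omega]
    push_cast
    field_simp
  rintro ⟨i, j⟩ hij
  rw [Finset.HasAntidiagonal.mem_antidiagonal] at hij
  subst hij
  have hf : (2 * i + 2)! = (2 * i + 2) * ((2 * i + 1) * (2 * i)!) := by
    rw [show 2 * i + 2 = 2 * i + 1 + 1 by ring, factorial_succ, factorial_succ]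
  rw [Nat.cast_choose ℚ (by omega), show 2 * (i + j) + 2 - (2 * i + 2) = 2 * j by omega, hf]
  simp only [sqDoubleFactorialRatio]
  push_cast
  field_simp

theorem Finset.sum_range_eq_sum_even_of_odd_eq_zero {M : Type*} [AddCommMonoid M] {f : ℕ → M}
    (hf : ∀ j, f (2 * j + 1) = 0) (N : ℕ) :
    ∑ k ∈ range (2 * N + 1), f k = ∑ j ∈ range (N + 1), f (2 * j) := by
  induction N with
  | zero => simp
  | succ N ih =>
    rw [show 2 * (N + 1) + 1 = 2 * N + 1 + 1 + 1 by ring, sum_range_succ, sum_range_succ, ih, hf,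
      sum_range_succ _ (N + 1), add_zero, mul_add_one]

/-- At `k = 1` the truncated `k - 2` gives `0‼ = 1`, matching `(-1)!! = 1`. -/
def brushCount (k : ℕ) : ℕ := if Even k then 0 else (k - 2)‼ ^ 2

theorem brushCount_two_mul (i : ℕ) : brushCount (2 * i) = 0 := by
  simp [brushCount]

theorem brushCount_two_mul_add_one (i : ℕ) : brushCount (2 * i + 1) = (2 * i - 1)‼ ^ 2 := by
  simp [brushCount, show 2 * i + 1 - 2 = 2 * i - 1 by omega]

theorem brushCount_two_mul_add_three (n : ℕ) :
    brushCount (2 * n + 3) = ∑ k ∈ range (2 * n + 3),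
      (2 * n + 2).choose k * ((k - 1) * (brushCount (2 * n + 3 - k) * brushCount (k - 1))) := by
  rw [show 2 * n + 3 = 2 * (n + 1) + 1 by ring, sum_range_eq_sum_even_of_odd_eq_zero (by
    intro j; simp [brushCount_two_mul]), sum_range_succ']
  simp only [mul_zero, zero_tsub, zero_mul, add_zero]
  rw [brushCount_two_mul_add_one, show 2 * (n + 1) - 1 = 2 * n + 1 by omega,
    ← sum_antidiagonal_choose_mul_sq_doubleFactorial,
    Nat.sum_antidiagonal_eq_sum_range_succ fun i j =>
      (2 * n + 2).choose (2 * i + 2) * (2 * i + 1) * ((2 * i - 1)‼ ^ 2 * (2 * j - 1)‼ ^ 2)]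
  refine sum_congr rfl fun k hk => ?_
  have hkn : k ≤ n := Nat.lt_succ_iff.1 (mem_range.1 hk)
  rw [show 2 * (n + 1) + 1 - 2 * (k + 1) = 2 * (n - k) + 1 by omega,
    show 2 * (k + 1) - 1 = 2 * k + 1 by omega, brushCount_two_mul_add_one,
    brushCount_two_mul_add_one, _root_.mul_add_one 2 k]
  ring

theorem Finset.card_filter_exists_lt {α : Type*} [LinearOrder α] (U : Finset α) :
    #(U.filter fun a => ∃ b ∈ U, b < a) = #U - 1 := by
  rcases U.eq_empty_or_nonempty with rfl | hU
  · simp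
  rw [← card_erase_of_mem (U.min'_mem hU)]
  congr 1
  ext a
  simp only [mem_filter, mem_erase]
  constructor
  · rintro ⟨haU, b, hbU, hba⟩
    exact ⟨(lt_of_le_of_lt (U.min'_le b hbU) hba).ne', haU⟩
  · rintro ⟨ha, haU⟩
    exact ⟨haU, _, U.min'_mem hU, U.min'_lt_of_mem_erase_min' hU (mem_erase.2 ⟨ha, haU⟩)⟩

namespace PTree

variable {d : ℕ}

theorem mem_leaves_node {f : Fin (d + 1) → PTree d} {b : ℕ} :
    b ∈ (node f).leaves ↔ ∃ i, b ∈ (f i).leaves := by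
  simp only [leaves, List.mem_flatten, List.mem_ofFn, exists_exists_eq_and]

theorem natCast_length_leaves : ∀ T : PTree d, (T.leaves.length : ZMod d) = 1
  | leaf _ => by simp [leaves]
  | node f => by simp [leaves, List.length_flatten, List.sum_ofFn, natCast_length_leaves]

theorem minLeaf_mem : ∀ T : PTree d, T.minLeaf ∈ T.leaves
  | leaf _ => by simp [leaves, minLeaf]
  | node f => by
    obtain ⟨i, -, hi⟩ := exists_mem_eq_inf' univ_nonempty fun i => (f i).minLeaf
    exact mem_leaves_node.2 ⟨i, by rw [minLeaf, hi]; exact minLeaf_mem (f i)⟩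

theorem minLeaf_le : ∀ {T : PTree d} {b : ℕ}, b ∈ T.leaves → T.minLeaf ≤ b
  | leaf _, _, h => by simp_all [leaves, minLeaf]
  | node f, _, h => by
    obtain ⟨i, hi⟩ := mem_leaves_node.1 h
    exact (inf'_le _ (mem_univ i)).trans (minLeaf_le hi)

/-- `T.OnLeafSet m` unfolds to `T.HasLeafSet (Finset.Icc 1 m)`. -/
def HasLeafSet (T : PTree d) (S : Finset ℕ) : Prop :=
  T.leaves.Nodup ∧ ∀ a, a ∈ T.leaves ↔ a ∈ S

namespace HasLeafSet

variable {T : PTree d} {S : Finset ℕ}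

theorem card_eq (h : T.HasLeafSet S) : #S = T.leaves.length := by
  rw [← List.toFinset_card_of_nodup h.1]
  congr 1
  ext a
  simp [h.2]

theorem minLeaf_mem (h : T.HasLeafSet S) : T.minLeaf ∈ S := (h.2 _).1 T.minLeaf_mem

theorem minLeaf_le (h : T.HasLeafSet S) {b : ℕ} (hb : b ∈ S) : T.minLeaf ≤ b :=
  PTree.minLeaf_le ((h.2 b).2 hb)

theorem unique {S' : Finset ℕ} (h : T.HasLeafSet S) (h' : T.HasLeafSet S') : S = S' := by
  ext b
  rw [← h.2, h'.2]

end HasLeafSet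

theorem odd_card_of_hasLeafSet {T : PTree 2} {S : Finset ℕ} (h : T.HasLeafSet S) : Odd #S := by
  rw [h.card_eq, ← ZMod.natCast_eq_one_iff_odd, natCast_length_leaves]

theorem leaves_node_vec (T₁ T₂ T₃ : PTree 2) :
    (node ![T₁, T₂, T₃]).leaves = T₁.leaves ++ T₂.leaves ++ T₃.leaves := by
  simp [leaves, List.ofFn_succ]

theorem isBrush_node_vec (T₁ T₂ : PTree 2) (a : ℕ) :
    (node ![T₁, T₂, leaf a]).IsBrush ↔ T₁.IsBrush ∧ T₂.IsBrush ∧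
      T₁.minLeaf < T₂.minLeaf ∧ T₂.minLeaf < a := by
  simp [IsBrush, Fin.forall_fin_succ, Fin.strictMono_iff_lt_succ, minLeaf, and_assoc]

theorem IsBrush.eq_vec {f : Fin 3 → PTree 2} (h : (node f).IsBrush) :
    ∃ T₁ T₂ a, f = ![T₁, T₂, leaf a] := by
  obtain ⟨a, ha⟩ := h.2.2
  refine ⟨f 0, f 1, a, funext fun i => ?_⟩
  fin_cases i
  · rfl
  · rfl
  · exact ha

theorem hasLeafSet_node_vec_iff {T₁ T₂ : PTree 2} {a : ℕ} {S : Finset ℕ} :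
    (node ![T₁, T₂, leaf a]).HasLeafSet S ↔
      ∃ U ⊆ S, a ∈ U ∧ T₁.HasLeafSet (S \ U) ∧ T₂.HasLeafSet (U.erase a) := by
  rw [HasLeafSet, leaves_node_vec]
  simp only [HasLeafSet, leaves, List.nodup_append, List.mem_append,
    List.mem_singleton, List.nodup_singleton, mem_sdiff, mem_erase]
  constructor
  · rintro ⟨⟨⟨h₁, h₂, h₁₂⟩, -, h₃⟩, hS⟩
    refine ⟨insert a T₂.leaves.toFinset, ?_, by simp, ⟨h₁, ?_⟩, ⟨h₂, ?_⟩⟩ <;>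
      grind [List.mem_toFinset]
  · rintro ⟨U, hUS, haU, ⟨h₁, hT₁⟩, ⟨h₂, hT₂⟩⟩
    refine ⟨⟨⟨h₁, h₂, ?_⟩, trivial, ?_⟩, ?_⟩ <;> grind

theorem hasLeafSet_leaf {a : ℕ} {S : Finset ℕ} : (leaf a : PTree 2).HasLeafSet S ↔ S = {a} := by
  simp only [HasLeafSet, leaves, List.nodup_singleton, List.mem_singleton, true_and,
    Finset.ext_iff, mem_singleton]
  exact forall_congr' fun _ => Iff.comm

theorem hasLeafSet_node_vec_and_isBrush_iff {T₁ T₂ : PTree 2} {a m : ℕ} {S : Finset ℕ}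
    (hm : IsLeast (S : Set ℕ) m) :
    (node ![T₁, T₂, leaf a]).HasLeafSet S ∧ (node ![T₁, T₂, leaf a]).IsBrush ↔
      ∃ U ⊆ S.erase m, a ∈ U ∧ (∃ b ∈ U, b < a) ∧
        (T₁.HasLeafSet (S \ U) ∧ T₁.IsBrush) ∧ (T₂.HasLeafSet (U.erase a) ∧ T₂.IsBrush) := by
  rw [hasLeafSet_node_vec_iff, isBrush_node_vec]
  constructor
  · rintro ⟨⟨U, hUS, haU, h₁, h₂⟩, hb₁, hb₂, h₁₂, h₂a⟩
    have hm₂ : m ≤ T₂.minLeaf := hm.2 (hUS (mem_of_mem_erase h₂.minLeaf_mem))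
    have hmU : m ∉ U := fun hmU => by
      rcases eq_or_ne m a with rfl | hma
      · exact h₂a.not_ge hm₂
      · have := h₂.minLeaf_le (mem_erase.2 ⟨hma, hmU⟩)
        have := hm.2 (mem_sdiff.1 h₁.minLeaf_mem).1
        omega
    refine ⟨U, fun x hx => mem_erase.2 ⟨fun h => hmU (h ▸ hx), hUS hx⟩, haU,
      ⟨_, mem_of_mem_erase h₂.minLeaf_mem, h₂a⟩, ⟨h₁, hb₁⟩, ⟨h₂, hb₂⟩⟩
  · rintro ⟨U, hUS, haU, ⟨b, hbU, hba⟩, ⟨h₁, hb₁⟩, ⟨h₂, hb₂⟩⟩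
    have hmU : m ∉ U := fun h => (mem_erase.1 (hUS h)).1 rfl
    have h₂S : T₂.minLeaf ∈ S.erase m := hUS (mem_of_mem_erase h₂.minLeaf_mem)
    have h₁m : T₁.minLeaf ≤ m := h₁.minLeaf_le (mem_sdiff.2 ⟨hm.1, hmU⟩)
    have h₂b : T₂.minLeaf ≤ b := h₂.minLeaf_le (mem_erase.2 ⟨hba.ne, hbU⟩)
    have := hm.2 (mem_of_mem_erase h₂S)
    have := ne_of_mem_erase h₂S
    refine ⟨⟨U, fun x hx => mem_of_mem_erase (hUS hx), haU, h₁, h₂⟩, hb₁, hb₂, ?_, ?_⟩ <;> omega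

theorem nontrivial_of_hasLeafSet_node_of_isBrush {f : Fin 3 → PTree 2} {S : Finset ℕ}
    (h : (node f).HasLeafSet S) (hb : (node f).IsBrush) : S.Nontrivial :=
  have mem (i : Fin 3) : (f i).minLeaf ∈ S := (h.2 _).1 (mem_leaves_node.2 ⟨i, minLeaf_mem _⟩)
  ⟨_, mem 0, _, mem 1, (hb.2.1 (show (0 : Fin 3) < 1 by decide)).ne⟩

abbrev Brush (S : Finset ℕ) : Type := {T : PTree 2 // T.HasLeafSet S ∧ T.IsBrush}

/-- A root split of a brush on `S`, where `m = min S`: the leaf set `U` of the middle subtree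
together with the rightmost leaf `a`, which may be any element of `U` except its minimum. -/
abbrev BrushSplit (S : Finset ℕ) (m : ℕ) : Type :=
  Σ U : (S.erase m).powerset, Σ a : ((U : Finset ℕ).filter fun a => ∃ b ∈ (U : Finset ℕ), b < a),
    Brush (S \ U) × Brush ((U : Finset ℕ).erase a)

namespace BrushSplit

variable {S : Finset ℕ} {m : ℕ}

def glue (hm : IsLeast (S : Set ℕ) m) (x : BrushSplit S m) : Brush S :=
  ⟨node ![x.2.2.1.1, x.2.2.2.1, leaf x.2.1], (hasLeafSet_node_vec_and_isBrush_iff hm).2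
    ⟨x.1, mem_powerset.1 x.1.2, (mem_filter.1 x.2.1.2).1, (mem_filter.1 x.2.1.2).2,
      x.2.2.1.2, x.2.2.2.2⟩⟩

theorem glue_injective (hm : IsLeast (S : Set ℕ) m) : Function.Injective (glue hm) := by
  rintro ⟨⟨U, hU⟩, ⟨a, ha⟩, ⟨T₁, hT₁⟩, ⟨T₂, hT₂⟩⟩ ⟨⟨U', hU'⟩, ⟨a', ha'⟩, ⟨T₁', hT₁'⟩, ⟨T₂', hT₂'⟩⟩ h
  have hf := node.inj (congrArg Subtype.val h)
  obtain rfl : T₁ = T₁' := congrFun hf 0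
  obtain rfl : T₂ = T₂' := congrFun hf 1
  obtain rfl : a = a' := leaf.inj (congrFun hf 2)
  obtain rfl : U = U' := by
    have haU : a ∈ U := (mem_filter.1 ha).1
    have haU' : a ∈ U' := (mem_filter.1 ha').1
    have h₂ : U.erase a = U'.erase a := hT₂.1.unique hT₂'.1
    rw [← insert_erase haU, ← insert_erase haU', h₂]
  rfl

theorem glue_surjective (hm : IsLeast (S : Set ℕ) m) (hS : S.Nontrivial) :
    Function.Surjective (glue hm) := by
  rintro ⟨T, hT⟩
  cases T with
  | leaf b => exact absurd (hasLeafSet_leaf.1 hT.1 ▸ hS) not_nontrivial_singleton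
  | node f =>
    obtain ⟨T₁, T₂, a, rfl⟩ := hT.2.eq_vec
    obtain ⟨U, hUS, haU, hba, h₁, h₂⟩ := (hasLeafSet_node_vec_and_isBrush_iff hm).1 hT
    exact ⟨⟨⟨U, mem_powerset.2 hUS⟩, ⟨a, mem_filter.2 ⟨haU, hba⟩⟩, ⟨_, h₁⟩, ⟨_, h₂⟩⟩, rfl⟩

end BrushSplit

noncomputable def brushSplitEquiv {S : Finset ℕ} {m : ℕ} (hm : IsLeast (S : Set ℕ) m)
    (hS : S.Nontrivial) : BrushSplit S m ≃ Brush S :=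
  Equiv.ofBijective _ ⟨BrushSplit.glue_injective hm, BrushSplit.glue_surjective hm hS⟩

theorem Brush.subsingleton {S : Finset ℕ} (hS : ¬S.Nontrivial) : Subsingleton (Brush S) := by
  have eq_leaf : ∀ T : Brush S, ∃ b, S = {b} ∧ T.1 = leaf b := by
    rintro ⟨T, h, hb⟩
    cases T with
    | leaf b => exact ⟨b, hasLeafSet_leaf.1 h, rfl⟩
    | node f => exact absurd (nontrivial_of_hasLeafSet_node_of_isBrush h hb) hS
  refine ⟨fun T T' => Subtype.ext ?_⟩
  obtain ⟨b, hb, hT⟩ := eq_leaf T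
  obtain ⟨b', hb', hT'⟩ := eq_leaf T'
  rw [hT, hT', singleton_inj.1 (hb.symm.trans hb')]

instance Brush.instFinite (S : Finset ℕ) : Finite (Brush S) := by
  induction h : #S using Nat.strong_induction_on generalizing S with
  | _ N ih =>
  by_cases hS : S.Nontrivial
  · have hm := S.isLeast_min' hS.nonempty
    have (U : (S.erase (S.min' hS.nonempty)).powerset)
        (a : ((U : Finset ℕ).filter fun a => ∃ b ∈ (U : Finset ℕ), b < a)) :
        Finite (Brush (S \ U) × Brush ((U : Finset ℕ).erase a)) := by
      obtain ⟨U, hU⟩ := U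
      obtain ⟨a, ha⟩ := a
      have hUS : U ⊆ S := (mem_powerset.1 hU).trans (erase_subset _ _)
      have haU : a ∈ U := (mem_filter.1 ha).1
      have := ih _ (h ▸ card_lt_card (sdiff_ssubset hUS ⟨a, haU⟩)) (S \ U) rfl
      have := ih _ (h ▸ card_lt_card ((erase_ssubset haU).trans_le hUS)) (U.erase a) rfl
      infer_instance
    exact Finite.of_equiv _ (brushSplitEquiv hm hS)
  · have := Brush.subsingleton hS
    infer_instance

theorem card_brush_eq_sum {S : Finset ℕ} {m : ℕ} (hm : IsLeast (S : Set ℕ) m) (hS : S.Nontrivial) :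
    Nat.card (Brush S) = ∑ U ∈ (S.erase m).powerset, ∑ a ∈ U.filter (fun a => ∃ b ∈ U, b < a),
      Nat.card (Brush (S \ U)) * Nat.card (Brush (U.erase a)) := by
  rw [← Nat.card_congr (brushSplitEquiv hm hS), Nat.card_sigma,
    ← sum_coe_sort (S.erase m).powerset]
  refine sum_congr rfl fun U _ => ?_
  rw [Nat.card_sigma]
  simp only [Nat.card_prod]
  exact sum_coe_sort _ fun a => Nat.card (Brush (S \ U)) * Nat.card (Brush ((U : Finset ℕ).erase a))

theorem card_brush_eq_sum_range {S : Finset ℕ} (hS : S.Nontrivial)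
    (ih : ∀ X : Finset ℕ, #X < #S → Nat.card (Brush X) = brushCount #X) :
    Nat.card (Brush S) = ∑ k ∈ range #S,
      (#S - 1).choose k * ((k - 1) * (brushCount (#S - k) * brushCount (k - 1))) := by
  have hm := S.isLeast_min' hS.nonempty
  have hcard : #(S.erase (S.min' hS.nonempty)) = #S - 1 := card_erase_of_mem hm.1
  have hpos : 0 < #S := hS.nonempty.card_pos
  rw [card_brush_eq_sum hm hS]
  trans ∑ U ∈ (S.erase (S.min' hS.nonempty)).powerset,
    (#U - 1) * (brushCount (#S - #U) * brushCount (#U - 1))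
  · refine sum_congr rfl fun U hU => ?_
    have hUS : U ⊆ S := (mem_powerset.1 hU).trans (erase_subset _ _)
    rw [sum_congr rfl (g := fun _ => brushCount (#S - #U) * brushCount (#U - 1)) fun a ha => ?_,
      sum_const, card_filter_exists_lt, smul_eq_mul]
    have haU : a ∈ U := (mem_filter.1 ha).1
    rw [ih _ (card_lt_card (sdiff_ssubset hUS ⟨a, haU⟩)), card_sdiff_of_subset hUS,
      ih _ (card_lt_card ((erase_ssubset haU).trans_le hUS)), card_erase_of_mem haU]
  · rw [sum_powerset_apply_card fun k => (k - 1) * (brushCount (#S - k) * brushCount (k - 1)),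
      hcard, Nat.sub_add_cancel hpos]
    rfl

theorem card_brush (S : Finset ℕ) : Nat.card (Brush S) = brushCount #S := by
  induction h : #S using Nat.strong_induction_on generalizing S with
  | _ N ih =>
  obtain ⟨i, rfl | rfl⟩ := Nat.even_or_odd' N
  · have : IsEmpty (Brush S) :=
      ⟨fun T => Nat.not_odd_iff_even.2 ⟨i, by omega⟩ (h ▸ odd_card_of_hasLeafSet T.2.1)⟩
    rw [Nat.card_of_isEmpty, brushCount_two_mul]
  rcases i with _ | n
  · obtain ⟨b, rfl⟩ := card_eq_one.1 h
    rw [Nat.card_eq_one_iff_unique.2 ⟨Brush.subsingleton not_nontrivial_singleton,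
      ⟨⟨leaf b, hasLeafSet_leaf.2 rfl, trivial⟩⟩⟩]
    rfl
  have hS : S.Nontrivial := one_lt_card_iff_nontrivial.1 (by omega)
  rw [card_brush_eq_sum_range hS fun X hX => ih _ (h ▸ hX) X rfl, h,
    show 2 * (n + 1) + 1 = 2 * n + 3 by ring, brushCount_two_mul_add_three]
  rfl

end PTree

/-- The number of rooted planar ternary trees on leaf set `[2n+1]` that are
`2`-brushes equals `((2n−1)!!)^2`. -/
theorem stmt_5 (n : ℕ) :
    Nat.card {T : PTree 2 // T.OnLeafSet (2 * n + 1) ∧ T.IsBrush} = ((2 * n - 1).doubleFactorial) ^ 2 := by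
  have h := PTree.card_brush (Icc 1 (2 * n + 1))
  rwa [Nat.card_Icc, Nat.add_sub_cancel, brushCount_two_mul_add_one] at h
end

section
/- Let P be a finite bounded poset that is totally semimodular and has length at least 2. Then every ordering a_1,…,a_t of the atoms of P is a recursive atom ordering. -/
/-- `IsRAO x y l` : `l` is a recursive atom ordering of the (bounded) interval
`[x,y]`.  If the interval has length 1 (i.e. `y` covers `x`), its unique atom
ordering `[y]` qualifies.  If the length is `> 1`, the list `l` must enumerate
the atoms of `[x,y]` (without repetition) so that
(i) each `[l_j, y]` admits a recursive atom ordering in which the atoms of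
`[l_j, y]` lying above some earlier atom `l_i` (`i < j`) come first, and
(ii) for `i < j`, if `l_i, l_j < w` (with `w` in the interval) then there are
`k < j` and an atom `z` of `[l_j, y]` with `l_k < z ≤ w`. -/
inductive IsRAO {α : Type*} [PartialOrder α] : α → α → List α → Prop where
  | single (x y : α) (h : x ⋖ y) : IsRAO x y [y]
  | step (x y : α) (l : List α) (hxy : x < y) (hcov : ¬ x ⋖ y)
      (hnd : l.Nodup)
      (hatoms : ∀ a : α, (x ⋖ a ∧ a ≤ y) ↔ a ∈ l)
      (m₁ m₂ : ∀ j : ℕ, j < l.length → List α)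
      (hrec : ∀ (j : ℕ) (hj : j < l.length),
        IsRAO (l.get ⟨j, hj⟩) y (m₁ j hj ++ m₂ j hj))
      (hfirst : ∀ (j : ℕ) (hj : j < l.length), ∀ z ∈ m₁ j hj,
        ∃ a ∈ l.take j, a ≤ z)
      (hsecond : ∀ (j : ℕ) (hj : j < l.length), ∀ z ∈ m₂ j hj,
        ¬ ∃ a ∈ l.take j, a ≤ z)
      (hii : ∀ (j : ℕ) (hj : j < l.length), ∀ a ∈ l.take j, ∀ w : α, w ≤ y →
        a < w → l.get ⟨j, hj⟩ < w →
        ∃ b ∈ l.take j, ∃ z : α, l.get ⟨j, hj⟩ ⋖ z ∧ z ≤ w ∧ b < z) :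
      IsRAO x y l

/-- A poset is totally semimodular if every closed interval is semimodular:
whenever `u ≠ v` both cover `w` within an interval (bounded above by `t`),
some element of the interval covers both `u` and `v`. -/
def TotallySemimodular (α : Type*) [PartialOrder α] : Prop :=
  ∀ w u v t : α, w ⋖ u → w ⋖ v → u ≠ v → u ≤ t → v ≤ t →
    ∃ z : α, u ⋖ z ∧ v ⋖ z ∧ z ≤ t

/-!
Every atom ordering works, with the atoms of `[a_j, y]` ordered by putting first those lying
above an earlier atom. Condition (i) then holds by induction on the lower endpoint of the interval
(well founded upwards since the poset is finite), `[a_j, y]` being again an interval of the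
totally semimodular poset. Condition (ii) is semimodularity of
`[x, w]` itself: the distinct atoms `a_i` and `a_j` lie below `w`, so some `z ≤ w` covers both,
and `z` is an atom of `[a_j, w]` above `a_i`.
-/

lemma List.eq_singleton_of_nodup_of_mem_iff {α : Type*} {l : List α} {y : α} (hnd : l.Nodup)
    (hmem : ∀ a, a = y ↔ a ∈ l) : l = [y] :=
  List.perm_singleton.mp <|
    (List.perm_ext_iff_of_nodup hnd (List.nodup_singleton y)).mpr fun a => by
      rw [← hmem, List.mem_singleton]

lemma List.Nodup.getElem_notMem_take {α : Type*} {l : List α} (hnd : l.Nodup) {j : ℕ}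
    (hj : j < l.length) : l[j] ∉ l.take j := fun h =>
  List.disjoint_take_drop hnd le_rfl h <| List.mem_iff_getElem.mpr ⟨0, by simpa using hj, by simp⟩

section FilterToList

variable {α : Type*} (s : Finset α) (p : α → Prop) [DecidablePred p]

lemma Finset.nodup_toList_filter_append_toList_filter_not :
    ((s.filter p).toList ++ (s.filter (¬ p ·)).toList).Nodup :=
  (Finset.nodup_toList _).append (Finset.nodup_toList _) fun _ h₁ h₂ =>
    (Finset.mem_filter.mp (Finset.mem_toList.mp h₂)).2
      (Finset.mem_filter.mp (Finset.mem_toList.mp h₁)).2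

lemma Finset.mem_toList_filter_append_toList_filter_not {a : α} :
    a ∈ (s.filter p).toList ++ (s.filter (¬ p ·)).toList ↔ a ∈ s := by
  classical
  rw [List.mem_append, Finset.mem_toList, Finset.mem_toList, ← Finset.mem_union,
    Finset.filter_union_filter_not_eq]

end FilterToList

namespace TotallySemimodular

variable {α : Type*} [PartialOrder α]

lemma exists_covBy_of_covBy (hsm : TotallySemimodular α) {x a b w : α} (hxa : x ⋖ a)
    (hxb : x ⋖ b) (hab : a ≠ b) (haw : a < w) (hbw : b < w) :
    ∃ z, a ⋖ z ∧ z ≤ w ∧ b < z :=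
  let ⟨z, haz, hbz, hzw⟩ := hsm x a b w hxa hxb hab haw.le hbw.le
  ⟨z, haz, hzw, hbz.lt⟩

theorem isRAO [Fintype α] (hsm : TotallySemimodular α) {x y : α} (hxy : x < y) (l : List α)
    (hnd : l.Nodup) (hatoms : ∀ a, (x ⋖ a ∧ a ≤ y) ↔ a ∈ l) : IsRAO x y l := by
  classical
  induction x using WellFoundedGT.induction generalizing l with
  | _ x ih =>
  by_cases hcov : x ⋖ y
  · have hl : l = [y] := List.eq_singleton_of_nodup_of_mem_iff hnd fun a => by
      rw [← hatoms]
      refine ⟨by rintro rfl; exact ⟨hcov, le_rfl⟩, fun ⟨hxa, hay⟩ => ?_⟩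
      exact (hcov.eq_or_eq hxa.le hay).resolve_left hxa.ne'
    exact hl ▸ IsRAO.single x y hcov
  have hmem : ∀ {j} (hj : j < l.length), x ⋖ l[j] ∧ l[j] < y := fun hj => by
    obtain ⟨hxa, hay⟩ := (hatoms _).mpr (List.getElem_mem hj)
    exact ⟨hxa, hay.lt_of_ne fun h => hcov (h ▸ hxa)⟩
  let covers (a : α) : Finset α := {z | a ⋖ z ∧ z ≤ y}
  let aboveEarlier (j : ℕ) (z : α) : Prop := ∃ b ∈ l.take j, b ≤ z
  refine IsRAO.step x y l hxy hcov hnd hatoms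
    (fun j hj => ((covers l[j]).filter (aboveEarlier j)).toList)
    (fun j hj => ((covers l[j]).filter (¬ aboveEarlier j ·)).toList) ?_ ?_ ?_ ?_
  · intro j hj
    refine ih _ (hmem hj).1.lt (hmem hj).2 _
      (Finset.nodup_toList_filter_append_toList_filter_not _ _) fun z => ?_
    rw [Finset.mem_toList_filter_append_toList_filter_not]
    simp [covers]
  · intro j hj z hz
    exact (Finset.mem_filter.mp (Finset.mem_toList.mp hz)).2
  · intro j hj z hz
    exact (Finset.mem_filter.mp (Finset.mem_toList.mp hz)).2
  · intro j hj b hb w _ hbw hjw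
    have hne : l[j] ≠ b := fun h => hnd.getElem_notMem_take hj (h ▸ hb)
    obtain ⟨z, hjz, hzw, hbz⟩ := hsm.exists_covBy_of_covBy (hmem hj).1
      ((hatoms b).mpr (List.mem_of_mem_take hb)).1 hne hjw hbw
    exact ⟨b, hb, z, hjz, hzw, hbz⟩

end TotallySemimodular

/-- In a finite bounded totally semimodular poset of length at least 2, every
ordering of the atoms is a recursive atom ordering. -/
theorem stmt_12 {α : Type*} [PartialOrder α] [BoundedOrder α] [Fintype α]
    (hsm : TotallySemimodular α) (hlen : ∃ z : α, ⊥ < z ∧ z < ⊤)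
    (l : List α) (hnd : l.Nodup) (hatoms : ∀ a : α, (⊥ ⋖ a) ↔ a ∈ l) :
    IsRAO (⊥ : α) ⊤ l := by
  obtain ⟨z, hbot, htop⟩ := hlen
  exact hsm.isRAO (hbot.trans htop) l hnd fun a => by simpa using hatoms a
end

section
/- An ordering F_1,…,F_t of the facets of a finite simplicial complex Δ is a shelling if and only if it is a recursive coatom ordering of the augmented face lattice L(Δ) (the face poset of Δ together with a minimum element ∅ and a maximum element 1̂). -/
variable {V : Type*} [DecidableEq V] [Fintype V]

/-- A shelling of a (possibly nonpure) simplicial complex: an ordering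
`F_1,…,F_t` of the facets such that for each `k ≥ 2`, every face of
`⟨F_k⟩ ∩ ⟨F_1,…,F_{k−1}⟩` is contained in a face of that intersection of
cardinality `|F_k| − 1` (i.e. the intersection is pure of dimension
`dim F_k − 1`). -/
def IsShelling (l : List (Finset V)) : Prop :=
  ∀ (k : ℕ) (hk : k < l.length), 1 ≤ k →
    ∀ G ⊆ l.get ⟨k, hk⟩, (∃ F' ∈ l.take k, G ⊆ F') →
      ∃ G' : Finset V, G ⊆ G' ∧ G' ⊆ l.get ⟨k, hk⟩ ∧
        G'.card + 1 = (l.get ⟨k, hk⟩).card ∧ ∃ F' ∈ l.take k, G' ⊆ F'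

/-- The augmented face lattice of `Δ`: all faces ordered by inclusion together
with an added top element. -/
abbrev FaceLattice (Δ : Finset (Finset V)) : Type _ :=
  WithTop {F : Finset V // F ∈ Δ}


/-!
In the dual of `L(Δ)` the atoms of `[1̂, ∅]` are the facets, and the interval `[F, ∅]` below
a face `F` is Boolean. In a Boolean lattice every ordering of the atoms is recursive, because two
distinct coatoms meet in a coatom of each. Hence condition (i) of a recursive coatom ordering
never constrains an ordering `F₁, …, F_t` of the facets, and condition (ii) for `F_k`, applied
to a common face `G` of `F_k` and an earlier `F_i`, asks for a face of `F_k` of codimension one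
that contains `G` and lies in an earlier facet: this is the shelling condition.
-/

open OrderDual

lemma List.Nodup.ne_getElem_of_mem_take {α : Type*} {l : List α} (hl : l.Nodup) {k : ℕ}
    (hk : k < l.length) {a : α} (ha : a ∈ l.take k) : a ≠ l[k] := by
  rintro rfl
  refine List.disjoint_take_drop hl le_rfl ha ?_
  rw [List.drop_eq_getElem_cons hk]
  exact List.mem_cons_self

lemma inf_covBy_of_covBy_of_ne {L : Type*} [Lattice L] [IsLowerModularLattice L] {a b c : L}
    (ha : a ⋖ c) (hb : b ⋖ c) (hab : a ≠ b) : a ⊓ b ⋖ b :=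
  inf_covBy_of_covBy_sup_left (by rwa [ha.wcovBy.sup_eq hb.wcovBy hab])

lemma Finset.covBy_iff_subset_and_card_add_one_eq {α : Type*} [DecidableEq α]
    {s t : Finset α} : s ⋖ t ↔ s ⊆ t ∧ s.card + 1 = t.card := by
  rw [Finset.covBy_iff_card_sdiff_eq_one]
  refine and_congr_right fun h => ?_
  have := Finset.card_le_card h
  rw [Finset.card_sdiff_of_subset h]
  omega

lemma Subtype.covBy_iff_of_isLowerSet {α : Type*} [Preorder α] {p : α → Prop}
    (hp : IsLowerSet {a | p a}) {a b : Subtype p} : a ⋖ b ↔ (a : α) ⋖ b := by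
  refine (Set.OrdConnected.apply_covBy_apply_iff (OrderEmbedding.subtype p) ?_).symm
  rw [OrderEmbedding.coe_subtype, Subtype.range_coe_subtype]
  exact hp.ordConnected

section RecursiveAtomOrdering

variable {α : Type*} [PartialOrder α] {x y : α} {l : List α}

/-- Condition (ii) of a recursive atom ordering `l` of an interval with top `y`. -/
def CoverExchange (y : α) (l : List α) : Prop :=
  ∀ (j : ℕ) (hj : j < l.length), ∀ a ∈ l.take j, ∀ w : α, w ≤ y →
    a < w → l.get ⟨j, hj⟩ < w →
    ∃ b ∈ l.take j, ∃ z : α, l.get ⟨j, hj⟩ ⋖ z ∧ z ≤ w ∧ b < z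

def IsAtomList (x y : α) (l : List α) : Prop :=
  l.Nodup ∧ ∀ a : α, (x ⋖ a ∧ a ≤ y) ↔ a ∈ l

lemma coverExchange_map_iff {β : Type*} (f : β → α) {l : List β} :
    CoverExchange y (l.map f) ↔ ∀ (j : ℕ) (hj : j < l.length), ∀ a ∈ l.take j, ∀ w : α, w ≤ y →
      f a < w → f l[j] < w → ∃ b ∈ l.take j, ∃ z : α, f l[j] ⋖ z ∧ z ≤ w ∧ f b < z := by
  simp [CoverExchange, ← List.map_take]

lemma IsAtomList.perm {l' : List α} (hl : IsAtomList x y l) (h : l.Perm l') :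
    IsAtomList x y l' :=
  ⟨hl.1.perm h, fun a => (hl.2 a).trans h.mem_iff⟩

lemma IsAtomList.exists [Finite α] (x y : α) : ∃ l, IsAtomList x y l := by
  classical
  let s := (Set.toFinite {a : α | x ⋖ a ∧ a ≤ y}).toFinset
  exact ⟨s.toList, s.nodup_toList, fun a => by simp [s]⟩

lemma IsAtomList.eq_singleton_of_covBy (hl : IsAtomList x y l) (hxy : x ⋖ y) : l = [y] := by
  classical
  have hl' : ∀ a, a ∈ l ↔ a = y := fun a => by
    rw [← hl.2]
    exact ⟨fun ⟨hxa, hay⟩ => hay.eq_of_not_lt fun h => hxy.2 hxa.lt h,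
      by rintro rfl; exact ⟨hxy, le_rfl⟩⟩
  exact List.perm_singleton.1 (List.perm_of_nodup_nodup_toFinset_eq hl.1 (List.nodup_singleton y)
    (by ext; simp [hl']))

/-- When every ordering of the atoms of every `[a, y]`, `a ∈ l`, is recursive, condition (i) can
always be met by listing first the atoms lying above earlier elements of `l`. -/
theorem isRAO_iff_coverExchange [Finite α] (hl : IsAtomList x y l) (hxy : x < y)
    (hcov : ¬ x ⋖ y) (hrec : ∀ a ∈ l, ∀ m, IsAtomList a y m → IsRAO a y m) :
    IsRAO x y l ↔ CoverExchange y l := by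
  classical
  constructor
  · rintro (⟨_, _, hxy'⟩ | ⟨_, _, _, _, _, _, _, _, _, _, _, _, hii⟩)
    · exact absurd hxy' hcov
    · exact hii
  · intro hii
    choose ms hms using fun a : α => IsAtomList.exists a y
    exact IsRAO.step x y l hxy hcov hl.1 hl.2
      (fun j hj => (ms (l.get ⟨j, hj⟩)).filter fun z => ∃ a ∈ l.take j, a ≤ z)
      (fun j hj => (ms (l.get ⟨j, hj⟩)).filter fun z => !decide (∃ a ∈ l.take j, a ≤ z))
      (fun j hj => hrec _ (l.get_mem _) _ ((hms _).perm (List.filter_append_perm _ _).symm))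
      (fun j hj z hz => by simpa using (List.mem_filter.1 hz).2)
      (fun j hj z hz => by simpa using (List.mem_filter.1 hz).2) hii

end RecursiveAtomOrdering

section WithTopDual

variable {α : Type*} [PartialOrder α] {a : α} {w : (WithTop α)ᵒᵈ}

lemma toDual_coe_lt_iff : toDual (a : WithTop α) < w ↔ ∃ b : α, w = toDual ↑b ∧ b < a := by
  obtain ⟨w, rfl⟩ := toDual.surjective w
  rw [toDual_lt_toDual, WithTop.lt_iff_exists_coe]
  simp

lemma toDual_coe_covBy_iff : toDual (a : WithTop α) ⋖ w ↔ ∃ b : α, w = toDual ↑b ∧ b ⋖ a := by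
  obtain ⟨w, rfl⟩ := toDual.surjective w
  rw [toDual_covBy_toDual_iff]
  cases w with
  | top =>
    refine iff_of_false (fun h => h.lt.not_ge le_top) ?_
    rintro ⟨b, hb, -⟩
    exact WithTop.top_ne_coe (toDual.injective hb)
  | coe b => simp

lemma toDual_top_covBy_iff : toDual (⊤ : WithTop α) ⋖ w ↔ ∃ b : α, w = toDual ↑b ∧ IsMax b := by
  obtain ⟨w, rfl⟩ := toDual.surjective w
  rw [toDual_covBy_toDual_iff, WithTop.covBy_top_iff]
  simp [and_comm]

lemma IsAtomList.exists_covBy_of_mem {y : (WithTop α)ᵒᵈ} {m : List (WithTop α)ᵒᵈ}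
    (hm : IsAtomList (toDual (a : WithTop α)) y m) (hw : w ∈ m) :
    ∃ b : α, w = toDual ↑b ∧ b ⋖ a :=
  toDual_coe_covBy_iff.1 ((hm.2 w).2 hw).1

end WithTopDual

section Faces

variable {V : Type*} {Δ : Finset (Finset V)}

lemma face_isMax_iff {F : {F : Finset V // F ∈ Δ}} : IsMax F ↔ ∀ G ∈ Δ, F.1 ⊆ G → F.1 = G :=
  ⟨fun h G hG hFG => congrArg Subtype.val (h.eq_of_le (a := F) (b := ⟨G, hG⟩) hFG),
    fun h G hFG => (Subtype.ext (h G.1 G.2 hFG)).ge⟩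

lemma le_toDual_coe_empty (hempty : ∅ ∈ Δ) (w : (WithTop {F : Finset V // F ∈ Δ})ᵒᵈ) :
    w ≤ toDual ((⟨∅, hempty⟩ : {F : Finset V // F ∈ Δ}) : WithTop _) := by
  obtain ⟨w, rfl⟩ := toDual.surjective w
  cases w with
  | top => exact toDual_le_toDual.2 le_top
  | coe G => exact toDual_le_toDual.2 (WithTop.coe_le_coe.2 (Finset.empty_subset G.1))

lemma face_covBy_iff (hdown : ∀ F ∈ Δ, ∀ G : Finset V, G ⊆ F → G ∈ Δ)
    {G F : {F : Finset V // F ∈ Δ}} : G ⋖ F ↔ G.1 ⋖ F.1 :=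
  Subtype.covBy_iff_of_isLowerSet fun F G hGF hF => hdown F hF G hGF

variable [DecidableEq V]

lemma IsAtomList.coverExchange_below_face (hdown : ∀ F ∈ Δ, ∀ G : Finset V, G ⊆ F → G ∈ Δ)
    {F : {F : Finset V // F ∈ Δ}} {y : (WithTop {F : Finset V // F ∈ Δ})ᵒᵈ}
    {m : List (WithTop {F : Finset V // F ∈ Δ})ᵒᵈ} (hm : IsAtomList (toDual (F : WithTop _)) y m) :
    CoverExchange y m := by
  intro j hj a ha w _ haw hjw
  obtain ⟨Ci, rfl, hCi⟩ := hm.exists_covBy_of_mem (List.mem_of_mem_take ha)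
  obtain ⟨Cj, hCj, hCjF⟩ := hm.exists_covBy_of_mem (m.get_mem ⟨j, hj⟩)
  have hne : Ci.1 ≠ Cj.1 := fun h => hm.1.ne_getElem_of_mem_take hj ha (by
    rw [Subtype.ext h]; exact hCj.symm)
  rw [hCj] at hjw ⊢
  obtain ⟨W, rfl, hWi⟩ := toDual_coe_lt_iff.1 haw
  have hWj : W < Cj := by simpa using hjw
  rw [face_covBy_iff hdown] at hCi hCjF
  let Z : {F : Finset V // F ∈ Δ} := ⟨Ci.1 ∩ Cj.1, hdown _ Ci.2 _ Finset.inter_subset_left⟩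
  have hZCj : Z ⋖ Cj := (face_covBy_iff hdown).2 (inf_covBy_of_covBy_of_ne hCi hCjF hne)
  have hZCi : Z < Ci := (inf_comm Cj.1 Ci.1 ▸ inf_covBy_of_covBy_of_ne hCjF hCi hne.symm).lt
  exact ⟨toDual ↑Ci, ha, toDual ↑Z, toDual_covBy_toDual_iff.2 (WithTop.coe_covBy_coe.2 hZCj),
    toDual_le_toDual.2 (WithTop.coe_le_coe.2 (Finset.subset_inter hWi.le hWj.le)),
    toDual_lt_toDual.2 (WithTop.coe_lt_coe.2 hZCi)⟩

theorem IsAtomList.isRAO_below_face (hdown : ∀ F ∈ Δ, ∀ G : Finset V, G ⊆ F → G ∈ Δ)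
    (hempty : ∅ ∈ Δ) {F : {F : Finset V // F ∈ Δ}} (hF : F.1.Nonempty)
    {m : List (WithTop {F : Finset V // F ∈ Δ})ᵒᵈ}
    (hm : IsAtomList (toDual (F : WithTop _))
      (toDual ((⟨∅, hempty⟩ : {F : Finset V // F ∈ Δ}) : WithTop _)) m) :
    IsRAO (toDual (F : WithTop _))
      (toDual ((⟨∅, hempty⟩ : {F : Finset V // F ∈ Δ}) : WithTop _)) m := by
  induction hn : F.1.card using Nat.strong_induction_on generalizing F m with
  | _ n ih =>
  have hEF : (⟨∅, hempty⟩ : {F : Finset V // F ∈ Δ}) < F := Finset.empty_ssubset.2 hF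
  by_cases hcov : (⟨∅, hempty⟩ : {F : Finset V // F ∈ Δ}) ⋖ F
  · have hcov' := toDual_covBy_toDual_iff.2 (WithTop.coe_covBy_coe.2 hcov)
    exact hm.eq_singleton_of_covBy hcov' ▸ IsRAO.single _ _ hcov'
  refine (isRAO_iff_coverExchange hm (toDual_lt_toDual.2 (WithTop.coe_lt_coe.2 hEF))
    (fun h => hcov (WithTop.coe_covBy_coe.1 (toDual_covBy_toDual_iff.1 h))) ?_).2
    (hm.coverExchange_below_face hdown)
  intro a ha m' hm'
  obtain ⟨G, rfl, hGF⟩ := hm.exists_covBy_of_mem ha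
  have hG : G.1.Nonempty := Finset.nonempty_iff_ne_empty.2 fun h =>
    hcov (by rwa [show G = ⟨∅, hempty⟩ from Subtype.ext h] at hGF)
  exact ih _ (hn ▸ Finset.card_lt_card hGF.lt) hG hm' rfl

end Faces

section Shelling

variable {V : Type*} {Δ : Finset (Finset V)} {l : List {F : Finset V // F ∈ Δ}}

lemma isShelling_map_val_iff :
    IsShelling (l.map Subtype.val) ↔ ∀ (k : ℕ) (hk : k < l.length), 1 ≤ k →
      ∀ G ⊆ l[k].1, (∃ F ∈ l.take k, G ⊆ F.1) →
        ∃ G' : Finset V, G ⊆ G' ∧ G' ⊆ l[k].1 ∧ G'.card + 1 = l[k].1.card ∧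
          ∃ F ∈ l.take k, G' ⊆ F.1 := by
  simp only [IsShelling, List.length_map, List.get_eq_getElem, List.getElem_map, ← List.map_take,
    List.mem_map, exists_exists_and_eq_and]

variable [DecidableEq V]

lemma IsShelling.coverExchange (hdown : ∀ F ∈ Δ, ∀ G : Finset V, G ⊆ F → G ∈ Δ)
    (hnd : l.Nodup) (hmax : ∀ F ∈ l, IsMax F) (hsh : IsShelling (l.map Subtype.val))
    (y : (WithTop {F : Finset V // F ∈ Δ})ᵒᵈ) :
    CoverExchange y
      (l.map fun F : {F : Finset V // F ∈ Δ} => toDual (F : WithTop {F : Finset V // F ∈ Δ})) := by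
  rw [isShelling_map_val_iff] at hsh
  rw [coverExchange_map_iff]
  intro j hj B hB w _ hBw hjw
  obtain ⟨W, rfl, hWB⟩ := toDual_coe_lt_iff.1 hBw
  have hWj : W < l[j] := by simpa using hjw
  have hj1 : 1 ≤ j := Nat.one_le_iff_ne_zero.2 (by rintro rfl; simp at hB)
  obtain ⟨G, hWG, hGj, hcard, B', hB', hGB'⟩ := hsh j hj hj1 W.1 hWj.le ⟨B, hB, hWB.le⟩
  let Z : {F : Finset V // F ∈ Δ} := ⟨G, hdown _ l[j].2 _ hGj⟩
  have hZB' : Z < B' := lt_of_le_of_ne hGB' fun h =>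
    hnd.ne_getElem_of_mem_take hj hB'
      ((hmax B' (List.mem_of_mem_take hB')).eq_of_le (h ▸ show Z ≤ l[j] from hGj))
  have hZj : Z ⋖ l[j] := by
    rw [face_covBy_iff hdown, Finset.covBy_iff_subset_and_card_add_one_eq]
    exact ⟨hGj, hcard⟩
  exact ⟨B', hB', toDual ↑Z, toDual_covBy_toDual_iff.2 (WithTop.coe_covBy_coe.2 hZj),
    toDual_le_toDual.2 (WithTop.coe_le_coe.2 hWG), toDual_lt_toDual.2 (WithTop.coe_lt_coe.2 hZB')⟩

lemma CoverExchange.isShelling (hdown : ∀ F ∈ Δ, ∀ G : Finset V, G ⊆ F → G ∈ Δ)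
    (hempty : ∅ ∈ Δ) (hnd : l.Nodup) (hmax : ∀ F ∈ l, IsMax F)
    (hex : CoverExchange (toDual ((⟨∅, hempty⟩ : {F : Finset V // F ∈ Δ}) : WithTop _))
      (l.map fun F : {F : Finset V // F ∈ Δ} =>
        toDual (F : WithTop {F : Finset V // F ∈ Δ}))) :
    IsShelling (l.map Subtype.val) := by
  rw [coverExchange_map_iff] at hex
  rw [isShelling_map_val_iff]
  intro k hk _ G hGk ⟨B, hB, hGB⟩
  let W : {F : Finset V // F ∈ Δ} := ⟨G, hdown _ B.2 _ hGB⟩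
  have hne := hnd.ne_getElem_of_mem_take hk hB
  have hWB : W < B := lt_of_le_of_ne hGB fun h =>
    hne ((hmax B (List.mem_of_mem_take hB)).eq_of_le (h ▸ show W ≤ l[k] from hGk))
  have hWk : W < l[k] := lt_of_le_of_ne hGk fun h =>
    hne ((hmax l[k] (List.getElem_mem hk)).eq_of_le (h ▸ show W ≤ B from hGB)).symm
  obtain ⟨B', hB', z, hkz, hzW, hB'z⟩ := hex k hk B hB (toDual ↑W) (le_toDual_coe_empty hempty _)
    (toDual_lt_toDual.2 (WithTop.coe_lt_coe.2 hWB)) (toDual_lt_toDual.2 (WithTop.coe_lt_coe.2 hWk))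
  obtain ⟨Z, rfl, hZk⟩ := toDual_coe_covBy_iff.1 hkz
  rw [face_covBy_iff hdown, Finset.covBy_iff_subset_and_card_add_one_eq] at hZk
  obtain ⟨hZk', hcard⟩ := hZk
  have hWZ : W ≤ Z := WithTop.coe_le_coe.1 (toDual_le_toDual.1 hzW)
  have hZB' : Z < B' := WithTop.coe_lt_coe.1 (toDual_lt_toDual.1 hB'z)
  exact ⟨Z.1, hWZ, hZk', hcard, B', hB', hZB'.le⟩

end Shelling

/-- An ordering of the facets of a finite simplicial complex is a shelling if
and only if it is a recursive coatom ordering of the augmented face lattice,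
i.e. a recursive atom ordering of its dual (from the top element down to the
empty face). -/
theorem stmt_13 (Δ : Finset (Finset V))
    (hdown : ∀ F ∈ Δ, ∀ G : Finset V, G ⊆ F → G ∈ Δ) (hempty : ∅ ∈ Δ)
    (l : List {F : Finset V // F ∈ Δ}) (hnd : l.Nodup)
    (hfacets : ∀ F : {F : Finset V // F ∈ Δ},
      (∀ G ∈ Δ, F.1 ⊆ G → F.1 = G) ↔ F ∈ l) :
    IsShelling (l.map Subtype.val) ↔
      IsRAO (α := (FaceLattice Δ)ᵒᵈ) (OrderDual.toDual (⊤ : FaceLattice Δ))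
        (OrderDual.toDual ((⟨∅, hempty⟩ : {F : Finset V // F ∈ Δ}) : FaceLattice Δ))
        (l.map fun F => OrderDual.toDual ((F : {F : Finset V // F ∈ Δ}) : FaceLattice Δ)) := by
  set E : {F : Finset V // F ∈ Δ} := ⟨∅, hempty⟩
  have hmax : ∀ F, IsMax F ↔ F ∈ l := fun F => face_isMax_iff.trans (hfacets F)
  have hatoms : IsAtomList (toDual (⊤ : FaceLattice Δ)) (toDual (E : FaceLattice Δ))
      (l.map fun F : {F : Finset V // F ∈ Δ} => toDual (F : FaceLattice Δ)) := by
    refine ⟨hnd.map (toDual.injective.comp WithTop.coe_injective), fun a => ?_⟩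
    rw [toDual_top_covBy_iff, List.mem_map]
    exact ⟨fun ⟨⟨F, haF, hF⟩, _⟩ => ⟨F, (hmax F).1 hF, haF.symm⟩,
      fun ⟨F, hF, hFa⟩ => ⟨⟨F, hFa.symm, (hmax F).2 hF⟩, le_toDual_coe_empty hempty a⟩⟩
  by_cases hE : IsMax E
  · have hcov := toDual_covBy_toDual_iff.2 (WithTop.coe_covBy_top.2 hE)
    have hl := hatoms.eq_singleton_of_covBy hcov
    have hlen : l.length = 1 := by simpa using congrArg List.length hl
    refine iff_of_true (fun k hk hk1 => ?_) (hl ▸ IsRAO.single _ _ hcov)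
    simp only [List.length_map, hlen] at hk
    omega
  rw [isRAO_iff_coverExchange hatoms (toDual_lt_toDual.2 (WithTop.coe_lt_top E))
    (fun h => hE (WithTop.coe_covBy_top.1 (toDual_covBy_toDual_iff.1 h)))]
  · exact ⟨fun hsh => hsh.coverExchange hdown hnd (fun F => (hmax F).2) _,
      CoverExchange.isShelling hdown hempty hnd fun F => (hmax F).2⟩
  · intro a ha m hm
    obtain ⟨F, hF, rfl⟩ := List.mem_map.1 ha
    refine hm.isRAO_below_face hdown hempty (Finset.nonempty_iff_ne_empty.2 fun h => hE ?_)
    exact (Subtype.ext h : F = E) ▸ (hmax F).2 hF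
end

section
/- Let P be a geometric semilattice. Then every principal upper order ideal P_{≥x} = {y ∈ P : y ≥ x} is a geometric semilattice. -/
variable {α : Type*} [SemilatticeInf α] [OrderBot α] [Fintype α]

/-- The closed interval `[x,y]` is a geometric lattice: it is a lattice (joins
of elements of the interval exist in the interval), it is atomistic (every
element is the join of the atoms of the interval below it), and it is
semimodular. -/
def IsGeomIcc (x y : α) : Prop :=
  (∀ u v : α, x ≤ u → u ≤ y → x ≤ v → v ≤ y →
    ∃ j : α, x ≤ j ∧ j ≤ y ∧ u ≤ j ∧ v ≤ j ∧
      ∀ w : α, u ≤ w → v ≤ w → w ≤ y → j ≤ w) ∧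
  (∀ z w : α, x ≤ z → z ≤ y → x ≤ w → w ≤ y →
    (∀ a : α, x ⋖ a → a ≤ y → a ≤ z → a ≤ w) → z ≤ w) ∧
  (∀ w u v : α, x ≤ w → u ≤ y → v ≤ y → w ⋖ u → w ⋖ v → u ≠ v →
    ∃ t : α, t ≤ y ∧ u ⋖ t ∧ v ⋖ t)

/-- The principal upper order ideal `P_{≥b}` is a geometric semilattice (with
respect to the rank function `r` of the ambient poset): it is closed under
meets, every closed interval in it is a geometric lattice, and for every
`x ≥ b` and every set `A` of atoms of `P_{≥b}` (elements covering `b`) whose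
join (computed in `P_{≥b}`, i.e. the least upper bound of `A ∪ {b}`) exists,
if `r(x) < r(⋁A)` then some `a ∈ A` satisfies `a ≰ x` and `a ∨ x` exists. -/
def IsGeomSemilatticeOn (r : α → ℕ) (b : α) : Prop :=
  (∀ u v : α, b ≤ u → b ≤ v → b ≤ u ⊓ v) ∧
  (∀ x y : α, b ≤ x → x ≤ y → IsGeomIcc x y) ∧
  (∀ x : α, b ≤ x → ∀ A : Finset α, (∀ a ∈ A, b ⋖ a) →
    ∀ s : α, IsLUB (insert b (A : Set α)) s → r x < r s →
      ∃ a ∈ A, ¬ a ≤ x ∧ ∃ j : α, IsLUB {a, x} j)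

/-- `r` is a rank function for the poset. -/
def IsRankFunction (r : α → ℕ) : Prop :=
  r ⊥ = 0 ∧ ∀ x y : α, x ⋖ y → r y = r x + 1

/-- Every principal upper order ideal `P_{≥x}` of a geometric semilattice `P`
is a geometric semilattice. -/
theorem stmt_14 (r : α → ℕ) (hr : IsRankFunction r)
    (h : IsGeomSemilatticeOn r (⊥ : α)) :
    ∀ x : α, IsGeomSemilatticeOn r x := by
  intro x
  classical
  refine ⟨fun u v hu hv => le_inf hu hv, fun a b hxa hab => h.2.1 a b bot_le hab, ?_⟩
  intro y hxy A hA s hs hrs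
  have hxs : x ≤ s := hs.1 (Set.mem_insert x _)
  have hAs : ∀ a ∈ A, a ≤ s := fun a ha => hs.1 (Set.mem_insert_of_mem _ ha)
  -- choose an atom below each a ∈ A not below x
  have key : ∀ a ∈ A, ∃ p : α, ⊥ ⋖ p ∧ p ≤ a ∧ ¬ p ≤ x := by
    intro a ha
    by_contra hc
    push_neg at hc
    have hgi := (h.2.1 ⊥ a bot_le bot_le).2.1 a (x ⊓ a) bot_le le_rfl bot_le
      inf_le_right (fun p hp hpa _ => le_inf (hc p hp hpa) hpa)
    exact absurd (hgi.trans inf_le_left) (not_le_of_gt (hA a ha).lt)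
  choose! f hf1 hf2 hf3 using key
  set A' : Finset α := (Finset.univ.filter (fun p => ⊥ ⋖ p ∧ p ≤ x)) ∪ A.image f with hA'def
  have hA'atoms : ∀ p ∈ A', ⊥ ⋖ p := by
    intro p hp
    rcases Finset.mem_union.1 hp with hp | hp
    · exact (Finset.mem_filter.1 hp).2.1
    · obtain ⟨a, ha, rfl⟩ := Finset.mem_image.1 hp
      exact hf1 a ha
  have hA'lub : IsLUB (insert ⊥ (A' : Set α)) s := by
    constructor
    · intro w hw
      rcases hw with rfl | hw
      · exact bot_le
      · rcases Finset.mem_union.1 hw with hw | hw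
        · exact ((Finset.mem_filter.1 hw).2.2).trans hxs
        · obtain ⟨a, ha, rfl⟩ := Finset.mem_image.1 hw
          exact (hf2 a ha).trans (hAs a ha)
    · intro w hw
      have hxw : x ≤ w := by
        have := (h.2.1 ⊥ x bot_le bot_le).2.1 x (x ⊓ w) bot_le le_rfl bot_le inf_le_left
          (fun p hp hpx _ => le_inf hpx (hw (Set.mem_insert_of_mem _
            (Finset.mem_coe.2 (Finset.mem_union_left _
              (Finset.mem_filter.2 ⟨Finset.mem_univ p, hp, hpx⟩))))))
        exact this.trans inf_le_right
      refine hs.2 ?_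
      intro z hz
      rcases hz with rfl | hz
      · exact hxw
      · have hfa : f z ≤ w := hw (Set.mem_insert_of_mem _
          (Finset.mem_coe.2 (Finset.mem_union_right _ (Finset.mem_image_of_mem f hz))))
        rcases (hA z hz).eq_or_eq (le_inf (hA z hz).lt.le hxw) inf_le_left with heq | heq
        · exact absurd (heq ▸ le_inf (hf2 z hz) hfa) (hf3 z hz)
        · exact heq ▸ inf_le_right
  obtain ⟨p, hpA', hpy, j, hj⟩ := h.2.2 y bot_le A' hA'atoms s hA'lub hrs
  rcases Finset.mem_union.1 hpA' with hp | hp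
  · exact absurd ((Finset.mem_filter.1 hp).2.2.trans hxy) hpy
  obtain ⟨a, ha, rfl⟩ := Finset.mem_image.1 hp
  have hyj : y ≤ j := hj.1 (Set.mem_insert_of_mem _ rfl)
  have hpj : f a ≤ j := hj.1 (Set.mem_insert _ _)
  have haj : a ≤ j := by
    rcases (hA a ha).eq_or_eq (le_inf (hA a ha).lt.le (hxy.trans hyj)) inf_le_left with heq | heq
    · exact absurd (heq ▸ le_inf (hf2 a ha) hpj) (hf3 a ha)
    · exact heq ▸ inf_le_right
  refine ⟨a, ha, fun hay => hpy ((hf2 a ha).trans hay), j, ?_, ?_⟩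
  · intro z hz
    rcases hz with rfl | hz
    · exact haj
    · exact hz ▸ hyj
  · intro w hw
    refine hj.2 ?_
    intro z hz
    rcases hz with rfl | hz
    · exact (hf2 a ha).trans (hw (Set.mem_insert _ _))
    · exact hz ▸ hw (Set.mem_insert_of_mem _ rfl)
end

section
/- Every geometric semilattice is pure: all maximal chains have the same length. -/
variable {α : Type*} [SemilatticeInf α] [OrderBot α] [Fintype α]

/-! Along a maximal chain the rank goes up by exactly one at each step, so a maximal chain has
`r m + 1` elements, where its top `m` is a maximal element of the whole poset. Any two maximal
elements have the same rank: if `r m < r x`, the exchange axiom applied to `m` and the atoms below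
`x` (whose join is `x`, since `[⊥, x]` is atomistic) yields an atom `a ≰ m` for which `a ∨ m`
exists, which is impossible as `m` is maximal. -/

lemma Fin.apply_eq_apply_zero_add {n : ℕ} (g : Fin (n + 1) → ℕ)
    (hg : ∀ i j, i ⋖ j → g j = g i + 1) (i : Fin (n + 1)) : g i = g 0 + i := by
  induction i using Fin.induction with
  | zero => simp
  | succ i ih =>
    rw [hg i.castSucc i.succ (Fin.covBy_iff.2 (by simp)), ih]
    simp [add_assoc]

lemma Fintype.apply_add_one_eq_of_covBy {β : Type*} [LinearOrder β] [Fintype β] (f : β → ℕ)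
    (hf : ∀ x y, x ⋖ y → f y = f x + 1) {a b : β} (ha : IsMin a) (hb : IsMax b) :
    f b + 1 = f a + Fintype.card β := by
  have : Nonempty β := ⟨a⟩
  obtain ⟨n, hn⟩ := Nat.exists_eq_add_one_of_ne_zero (Fintype.card_ne_zero (α := β))
  let e := Fintype.orderIsoFinOfCardEq β hn
  have he₀ : e 0 = a := by
    simpa [bot_eq_zero] using (e.symm_apply_eq.1 (e.symm.isMin_apply.2 ha).eq_bot).symm
  have he_last : e (Fin.last n) = b := by
    simpa [Fin.top_eq_last] using (e.symm_apply_eq.1 (e.symm.isMax_apply.2 hb).eq_top).symm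
  have := Fin.apply_eq_apply_zero_add (f ∘ e)
    (fun i j hij => hf _ _ ((apply_covBy_apply_iff e).2 hij)) (Fin.last n)
  simp only [Function.comp, he₀, he_last, Fin.val_last] at this
  omega

lemma IsMaxChain.exists_isMax_apply_add_one_eq {β : Type*} [PartialOrder β] [OrderBot β]
    [Finite β] {c : Set β} (hc : IsMaxChain (· ≤ ·) c) (f : β → ℕ)
    (hf : ∀ x y, x ⋖ y → f y = f x + 1) :
    ∃ m, IsMax m ∧ f m + 1 = f ⊥ + c.ncard := by
  classical
  let s := Flag.ofIsMaxChain c hc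
  have : Fintype s := Fintype.ofFinite s
  obtain ⟨m, hm⟩ := Finite.exists_max (fun x : s => x)
  have hm_max : IsMax m := fun y _ => hm y
  refine ⟨m, Flag.isMax_coe.2 hm_max, ?_⟩
  rw [← Nat.card_coe_set_eq]
  change _ = _ + Nat.card s
  rw [Nat.card_eq_fintype_card]
  exact Fintype.apply_add_one_eq_of_covBy (fun x : s => f x)
    (fun x y hxy => hf _ _ (Flag.coe_covBy_coe.2 hxy)) (a := ⟨⊥, s.bot_mem⟩)
    (fun _ _ => bot_le) hm_max

lemma IsGeomIcc.isLUB_atoms {β : Type*} [SemilatticeInf β] {x y : β} (h : IsGeomIcc x y)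
    (hxy : x ≤ y) :
    IsLUB (insert x {a | x ⋖ a ∧ a ≤ y}) y := by
  refine ⟨?_, fun w hw => ?_⟩
  · rintro a (rfl | ⟨-, hay⟩)
    exacts [hxy, hay]
  · have hxw : x ≤ w := hw (Set.mem_insert x _)
    have := h.2.1 y (y ⊓ w) hxy le_rfl (le_inf hxy hxw) inf_le_left
      fun a hxa hay _ => le_inf hay (hw (Set.mem_insert_of_mem x ⟨hxa, hay⟩))
    exact this.trans inf_le_right

lemma IsGeomSemilatticeOn.rank_le_of_isMax {β : Type*} [SemilatticeInf β] [Finite β]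
    {r : β → ℕ} {b : β} (h : IsGeomSemilatticeOn r b) {x m : β} (hbx : b ≤ x)
    (hbm : b ≤ m) (hm : IsMax m) : r x ≤ r m := by
  by_contra! hlt
  have hfin := Set.toFinite {a | b ⋖ a ∧ a ≤ x}
  have hlub : IsLUB (insert b (hfin.toFinset : Set β)) x := by
    simpa using (h.2.1 b x le_rfl hbx).isLUB_atoms hbx
  obtain ⟨a, -, ham, j, hj⟩ :=
    h.2.2 m hbm hfin.toFinset (fun a ha => ((hfin.mem_toFinset).1 ha).1) x hlub hlt
  have hmj : m = j := hm.eq_of_le (hj.1 (by simp))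
  exact ham (hmj ▸ hj.1 (by simp))

/-- Every geometric semilattice is pure: all maximal chains have the same
length. -/
theorem stmt_15 (r : α → ℕ) (hr : IsRankFunction r)
    (h : IsGeomSemilatticeOn r (⊥ : α)) :
    ∀ c₁ c₂ : Set α, IsMaxChain (· ≤ ·) c₁ → IsMaxChain (· ≤ ·) c₂ →
      c₁.ncard = c₂.ncard := by
  intro c₁ c₂ hc₁ hc₂
  obtain ⟨m₁, hm₁, hcard₁⟩ := hc₁.exists_isMax_apply_add_one_eq r hr.2
  obtain ⟨m₂, hm₂, hcard₂⟩ := hc₂.exists_isMax_apply_add_one_eq r hr.2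
  have : r m₁ = r m₂ :=
    le_antisymm (h.rank_le_of_isMax bot_le bot_le hm₂) (h.rank_le_of_isMax bot_le bot_le hm₁)
  omega
end
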